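/- arXiv:1401.6519 — 12 statements merged into one kernel-verified Lean document; each statement's English description precedes it below -/
import Mathlib

section
/- If a topological space X is radial at a point x and A ⊆ X satisfies x ∈ closure(A), then there exists a regular cardinal λ ≤ |X| and an injective transfinite sequence (x_α)_{α<λ} with all terms in A that converges to x strictly, meaning x is not in the closure of any proper initial segment {x_β : β < α}. -/
/-!
Take a transfinite sequence in `A` converging to `x` of least possible length `o`, and pass to a
cofinal subsequence of regular length `cf o`. Minimality makes `x` avoid the closure of every
`S ⊆ A` with `|S| < |o|`: radiality gives a sequence in `S` converging to `x`, of regular length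
`λ ≥ o`, and having fewer than `cf λ` values it repeats one value cofinally often; that value
lies in every neighbourhood of `x`, so `o = 1` and `S = ∅`. In particular no initial segment of
the sequence has `x` in its closure, so new values keep appearing cofinally often, and the
subsequence of first occurrences of new values, reindexed by the regular order itself, is
injective and converges strictly.
-/

open Filter Topology Set

universe u v

/-- `X` is radial at `x`: every set with `x` in its closure contains a transfinite
sequence (an ordinal-indexed net, with nonempty domain) converging to `x`. -/
def RadialAt {X : Type u} [TopologicalSpace X] (x : X) : Prop :=
  ∀ A : Set X, x ∈ closure A →
    ∃ o : Ordinal.{u}, o ≠ 0 ∧ ∃ f : o.ToType → X,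
      (∀ a, f a ∈ A) ∧ Filter.Tendsto f Filter.atTop (nhds x)

open Cardinal
open scoped Ordinal

theorem Monotone.tendsto_atTop_of_isCofinal_range {α β : Type*} [Preorder α] [Preorder β]
    {g : α → β} (hg : Monotone g) (hrange : IsCofinal (range g)) :
    Tendsto g atTop atTop :=
  tendsto_atTop_atTop_of_monotone hg fun b ↦
    let ⟨_, ⟨a, rfl⟩, hba⟩ := hrange b; ⟨a, hba⟩

section FirstOccurrences

variable {α β : Type*} [LinearOrder α] [WellFoundedLT α]

def firstOccurrences (f : α → β) : Set α := {a | ∀ b < a, f b ≠ f a}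

theorem exists_mem_firstOccurrences_eq (f : α → β) (a : α) :
    ∃ a' ∈ firstOccurrences f, f a' = f a := by
  obtain ⟨a', ha', hmin⟩ := WellFounded.has_min wellFounded_lt {c | f c = f a} ⟨a, rfl⟩
  exact ⟨a', fun b hb hfb ↦ hmin b (hfb.trans ha') hb, ha'⟩

theorem isCofinal_firstOccurrences {f : α → β} (hf : ∀ b, ¬ range f ⊆ f '' Iio b) :
    IsCofinal (firstOccurrences f) := by
  by_contra hcof
  obtain ⟨b, hb⟩ := not_isCofinal_iff.1 hcof
  refine hf b ?_
  rintro _ ⟨a, rfl⟩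
  obtain ⟨a', ha', hfa'⟩ := exists_mem_firstOccurrences_eq f a
  exact ⟨a', hb a' ha', hfa'⟩

theorem exists_strictMono_injective_comp [IsRegularCardinalOrder α] {f : α → β}
    (hf : ∀ b, ¬ range f ⊆ f '' Iio b) :
    ∃ g : α → α, StrictMono g ∧ IsCofinal (range g) ∧ Function.Injective (f ∘ g) := by
  set T := firstOccurrences f
  have hT : IsCofinal T := isCofinal_firstOccurrences hf
  obtain ⟨hg, hrange⟩ := Order.enum_eq_iff.1 (rfl : Subtype.val ∘ Order.enum T hT = _)
  refine ⟨_, hg, by rwa [hrange], .of_lt_imp_ne fun a b hab ↦ ?_⟩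
  exact (Order.enum T hT b).2 _ (hg hab)

end FirstOccurrences

section TransfiniteSeq

variable {X : Type u} [TopologicalSpace X]

def HasTransfiniteSeq (A : Set X) (x : X) (o : Ordinal.{u}) : Prop :=
  o ≠ 0 ∧ ∃ f : o.ToType → X, (∀ a, f a ∈ A) ∧ Tendsto f atTop (𝓝 x)

theorem HasTransfiniteSeq.mono {A B : Set X} {x : X} {o : Ordinal.{u}} (hAB : A ⊆ B)
    (h : HasTransfiniteSeq A x o) : HasTransfiniteSeq B x o :=
  let ⟨ho, f, hfA, hf⟩ := h
  ⟨ho, f, fun a ↦ hAB (hfA a), hf⟩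

theorem hasTransfiniteSeq_type {α : Type u} [LinearOrder α] [WellFoundedLT α] [Nonempty α]
    {A : Set X} {x : X} {f : α → X} (hfA : ∀ a, f a ∈ A) (hf : Tendsto f atTop (𝓝 x)) :
    HasTransfiniteSeq A x (typeLT α) := by
  let e : (typeLT α).ToType ≃o α :=
    .ofRelIsoLT (Ordinal.type_eq.1 (Ordinal.type_toType (typeLT α))).some
  exact ⟨Ordinal.type_ne_zero_of_nonempty _, f ∘ e, fun a ↦ hfA (e a),
    hf.comp (e.monotone.tendsto_atTop_of_isCofinal_range (e.surjective.range_eq ▸ .univ))⟩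

theorem HasTransfiniteSeq.ord_cof {A : Set X} {x : X} {o : Ordinal.{u}}
    (h : HasTransfiniteSeq A x o) : HasTransfiniteSeq A x o.cof.ord := by
  obtain ⟨ho, f, hfA, hf⟩ := h
  have : Nonempty o.ToType := Ordinal.nonempty_toType_iff.2 ho
  obtain ⟨s, hs, htype⟩ := Ordinal.exists_ord_cof_eq o.ToType
  have : Nonempty s := hs.nonempty.to_subtype
  rw [← Ordinal.cof_toType, ← htype]
  exact hasTransfiniteSeq_type (fun a ↦ hfA a)
    (hf.comp ((Subtype.mono_coe _).tendsto_atTop_of_isCofinal_range (by rwa [Subtype.range_coe])))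

theorem exists_specializes_of_mk_lt_cof {α : Type u} [LinearOrder α] {S : Set X} {x : X}
    {f : α → X} (hfS : ∀ a, f a ∈ S) (hf : Tendsto f atTop (𝓝 x))
    (hS : #S < Order.cof α) : ∃ y ∈ S, y ⤳ x := by
  have : Nonempty α := Order.cof_ne_zero_iff.1 (ne_bot_of_gt hS)
  have hcover : IsCofinal (⋃ y : S, f ⁻¹' {(y : X)}) := by
    refine IsCofinal.univ.mono fun a _ ↦ mem_iUnion.2 ⟨⟨f a, hfS a⟩, rfl⟩
  obtain ⟨⟨y, hy⟩, hfib⟩ := isCofinal_of_isCofinal_iUnion hcover hS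
  refine ⟨y, hy, specializes_iff_pure.2 (pure_le_iff.2 fun U hU ↦ ?_)⟩
  obtain ⟨a₀, ha₀⟩ := eventually_atTop.1 (hf hU)
  obtain ⟨a, rfl, ha⟩ := hfib a₀
  exact ha₀ a ha

theorem exists_injective_comp_of_notMem_closure_image_Iio {α : Type*} [LinearOrder α]
    [WellFoundedLT α] [IsRegularCardinalOrder α] {f : α → X} {x : X}
    (hf : Tendsto f atTop (𝓝 x)) (hstrict : ∀ b, x ∉ closure (f '' Iio b)) :
    ∃ g : α → α, Function.Injective (f ∘ g) ∧ Tendsto (f ∘ g) atTop (𝓝 x) ∧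
      ∀ a, x ∉ closure ((f ∘ g) '' Iio a) := by
  have hnew : ∀ b, ¬ range f ⊆ f '' Iio b := fun b hb ↦
    have : Nonempty α := ⟨b⟩
    hstrict b (mem_closure_of_tendsto hf (.of_forall fun a ↦ hb ⟨a, rfl⟩))
  obtain ⟨g, hg, hrange, hinj⟩ := exists_strictMono_injective_comp hnew
  refine ⟨g, hinj, hf.comp (hg.monotone.tendsto_atTop_of_isCofinal_range hrange),
    fun a ↦ ?_⟩
  refine fun hx ↦ hstrict (g a) (closure_mono ?_ hx)
  rintro _ ⟨b, hb, rfl⟩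
  exact ⟨g b, hg hb, rfl⟩

variable {A : Set X} {x : X} {o : Ordinal.{u}}

noncomputable def transfiniteSeqLength (A : Set X) (x : X) : Ordinal.{u} :=
  sInf {o | HasTransfiniteSeq A x o}

theorem transfiniteSeqLength_le (h : HasTransfiniteSeq A x o) : transfiniteSeqLength A x ≤ o :=
  csInf_le' h

theorem hasTransfiniteSeq_transfiniteSeqLength (h : HasTransfiniteSeq A x o) :
    HasTransfiniteSeq A x (transfiniteSeqLength A x) :=
  csInf_mem (s := {o | HasTransfiniteSeq A x o}) ⟨o, h⟩

/-- By pigeonhole, a sequence in `S` of regular length `≥ transfiniteSeqLength A x` takes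
cofinally often a value lying in every neighbourhood of `x`, so that length would be `1`. -/
theorem notMem_closure_of_mk_lt_card (hrad : RadialAt x) {S : Set X} (hSA : S ⊆ A)
    (hS : #S < (transfiniteSeqLength A x).card) : x ∉ closure S := by
  intro hxS
  obtain ⟨l, hl⟩ : ∃ l, HasTransfiniteSeq S x l := hrad S hxS
  obtain ⟨-, f, hfS, hf⟩ := hl.ord_cof
  have hlen : transfiniteSeqLength A x ≤ l.cof.ord :=
    transfiniteSeqLength_le (hl.ord_cof.mono hSA)
  have hScof : #S < Order.cof l.cof.ord.ToType := by
    rw [Ordinal.cof_toType, Ordinal.cof_ord_cof]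
    simpa using hS.trans_le (Ordinal.card_le_card hlen)
  obtain ⟨y, hy, hyx⟩ := exists_specializes_of_mk_lt_cof hfS hf hScof
  have hlen1 : transfiniteSeqLength A x ≤ 1 :=
    transfiniteSeqLength_le
      ⟨one_ne_zero, fun _ ↦ y, fun _ ↦ hSA hy, tendsto_const_nhds.mono_right hyx⟩
  have : #S < 1 := by simpa using hS.trans_le (Ordinal.card_le_card hlen1)
  exact (Cardinal.mk_ne_zero_iff.2 ⟨⟨y, hy⟩⟩) (Cardinal.lt_one_iff.1 this)

end TransfiniteSeq

instance Ordinal.isRegularCardinalOrder_toType_ord_cof (o : Ordinal) :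
    IsRegularCardinalOrder o.cof.ord.ToType :=
  ⟨by rw [Ordinal.type_toType, Ordinal.cof_toType, Ordinal.cof_ord_cof]⟩

/-- Lemma 2.2: if `X` is radial at `x` and `x ∈ closure A`, there is a nonzero regular
cardinal `κ ≤ |X|` and an injective transfinite sequence of length `κ` contained in `A`
converging strictly to `x`. -/
theorem stmt_0 {X : Type u} [TopologicalSpace X] (x : X) (hrad : RadialAt x)
    (A : Set X) (hA : x ∈ closure A) :
    ∃ κ : Cardinal.{u}, κ ≠ 0 ∧ κ.ord.cof = κ ∧ κ ≤ Cardinal.mk X ∧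
      ∃ f : κ.ord.ToType → X, Function.Injective f ∧ (∀ a, f a ∈ A) ∧
        Filter.Tendsto f Filter.atTop (nhds x) ∧
        ∀ a : κ.ord.ToType, x ∉ closure (f '' {b | b < a}) := by
  obtain ⟨l, hl⟩ : ∃ l, HasTransfiniteSeq A x l := hrad A hA
  set o := transfiniteSeqLength A x
  obtain ⟨hκ, f, hfA, hf⟩ := (hasTransfiniteSeq_transfiniteSeqLength hl).ord_cof
  have hsmall : ∀ b : o.cof.ord.ToType, x ∉ closure (f '' Iio b) := fun b ↦
    notMem_closure_of_mk_lt_card hrad (image_subset_iff.2 fun a _ ↦ hfA a) <|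
      calc #(f '' Iio b) ≤ #(Iio b) := mk_image_le
        _ < o.cof := by simpa using mk_Iio_lt b (by simp)
        _ ≤ o.card := Ordinal.cof_le_card o
  obtain ⟨g, hinj, hfg, hstrict⟩ := exists_injective_comp_of_notMem_closure_image_Iio hf hsmall
  refine ⟨o.cof, by simpa using hκ, Ordinal.cof_ord_cof o, ?_, f ∘ g, hinj, fun a ↦ hfA _, hfg,
    hstrict⟩
  simpa using mk_le_of_injective hinj
end

section
/- The Tychonoff plank X := (ω+1) × (ω₁+1), with each factor carrying its order topology and X the product topology, is not radial at the corner point (ω, ω₁): the set A := ω × ω₁ has (ω, ω₁) in its closure, but no transfinite sequence contained in A converges to (ω, ω₁). -/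
open Filter Topology Set

universe u v

/-!
Let `f` be a transfinite sequence in `ω × ω₁` converging to `(ω, ω₁)`. Its first coordinates
stay below `ω` yet converge to `ω`, so choosing for each `n` an index past which they exceed `n`
gives a countable cofinal set of indices. By regularity of `ω₁`, the second coordinates at these
countably many indices are bounded by some `β < ω₁`, whereas eventually all second coordinates
exceed `β`.
-/

section LinearOrder

variable {P : Type*} [LinearOrder P] [TopologicalSpace P] [OrderTopology P]

theorem mem_closure_Iio_of_exists_between {a : P} (hne : (Iio a).Nonempty)
    (hbetween : ∀ x < a, ∃ y, x < y ∧ y < a) : a ∈ closure (Iio a) := by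
  refine IsLUB.mem_closure ⟨fun _ hx ↦ hx.le, fun x hx ↦ ?_⟩ hne
  by_contra! hxa
  obtain ⟨y, hxy, hya⟩ := hbetween x hxa
  exact (hx hya).not_gt hxy

theorem exists_seq_cofinal_of_tendsto {ι : Type*} [LinearOrder ι] [Nonempty ι] {g : ι → P}
    {a : P} (hg : Tendsto g atTop (𝓝 a)) (hga : ∀ i, g i < a) {s : ℕ → P}
    (hs : ∀ n, s n < a) (hcof : ∀ x < a, ∃ n, x ≤ s n) : ∃ j : ℕ → ι, ∀ i, ∃ n, i < j n := by
  have hev : ∀ n, ∃ j, ∀ i ≥ j, s n < g i := fun n ↦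
    eventually_atTop.mp (hg (Ioi_mem_nhds (hs n)))
  choose j hj using hev
  refine ⟨j, fun i ↦ ?_⟩
  obtain ⟨n, hn⟩ := hcof (g i) (hga i)
  exact ⟨n, lt_of_not_ge fun hji ↦ (hj n i hji).not_ge hn⟩

theorem not_tendsto_of_seq_cofinal {ι : Type*} [LinearOrder ι] {j : ℕ → ι}
    (hj : ∀ i, ∃ n, i < j n) {g : ι → P} {a : P} (hga : ∀ i, g i < a)
    (hbdd : ∀ t : ℕ → P, (∀ n, t n < a) → ∃ β < a, ∀ n, t n ≤ β) :
    ¬ Tendsto g atTop (𝓝 a) := by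
  intro hg
  have : Nonempty ι := ⟨j 0⟩
  obtain ⟨β, hβa, hβ⟩ := hbdd (g ∘ j) fun n ↦ hga (j n)
  obtain ⟨k, hk⟩ := eventually_atTop.mp (hg (Ioi_mem_nhds hβa))
  obtain ⟨n, hn⟩ := hj k
  exact (hk (j n) hn.le).not_ge (hβ n)

end LinearOrder

section OrdinalInterval

variable {P : Type*} [LinearOrder P] {c : Ordinal.{u}} (e : P ≃o Iic c) {a : P}

theorem OrderIso.lt_iff_coe_lt {x y : P} : x < y ↔ (e x : Ordinal) < e y := by simp

theorem OrderIso.exists_coe_apply_eq {β : Ordinal} (hβ : β ≤ c) : ∃ x, (e x : Ordinal) = β :=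
  ⟨e.symm ⟨β, hβ⟩, by simp⟩

variable {e}

theorem OrderIso.lt_iff_coe_lt_of_apply_eq (ha : (e a : Ordinal) = c) {x : P} : x < a ↔ (e x : Ordinal) < c := by
  rw [e.lt_iff_coe_lt, ha]

theorem OrderIso.lt_of_ne_of_apply_eq (ha : (e a : Ordinal) = c) {x : P} (hx : x ≠ a) : x < a := by
  refine lt_of_le_of_ne ?_ hx
  rw [← e.le_iff_le, ← Subtype.coe_le_coe, ha]
  exact (e x).2

theorem OrderIso.mem_closure_Iio_of_isSuccLimit [TopologicalSpace P] [OrderTopology P]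
    (ha : (e a : Ordinal) = c) (hc : Order.IsSuccLimit c) : a ∈ closure (Iio a) := by
  refine mem_closure_Iio_of_exists_between ?_ fun x hx ↦ ?_
  · obtain ⟨x, hx⟩ := e.exists_coe_apply_eq hc.bot_lt.le
    exact ⟨x, (e.lt_iff_coe_lt_of_apply_eq ha).2 (hx ▸ hc.bot_lt)⟩
  · have hsucc := hc.succ_lt ((e.lt_iff_coe_lt_of_apply_eq ha).1 hx)
    obtain ⟨y, hy⟩ := e.exists_coe_apply_eq hsucc.le
    refine ⟨y, ?_, (e.lt_iff_coe_lt_of_apply_eq ha).2 (hy ▸ hsucc)⟩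
    rw [e.lt_iff_coe_lt, hy]
    exact Order.lt_succ _

end OrdinalInterval

theorem OrderIso.exists_seq_cofinal_Iio_of_omega0 {P : Type*} [LinearOrder P]
    {e : P ≃o Iic Ordinal.omega0.{u}} {a : P} (ha : (e a : Ordinal) = Ordinal.omega0) :
    ∃ s : ℕ → P, (∀ n, s n < a) ∧ ∀ x < a, ∃ n, x ≤ s n := by
  choose s hs using fun n : ℕ ↦ e.exists_coe_apply_eq (Ordinal.natCast_lt_omega0 n).le
  refine ⟨s, fun n ↦ (e.lt_iff_coe_lt_of_apply_eq ha).2 (hs n ▸ Ordinal.natCast_lt_omega0 n),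
    fun x hx ↦ ?_⟩
  obtain ⟨n, hn⟩ := Ordinal.lt_omega0.1 ((e.lt_iff_coe_lt_of_apply_eq ha).1 hx)
  exact ⟨n, by rw [← not_lt, e.lt_iff_coe_lt, hs, hn]; exact lt_irrefl _⟩

theorem OrderIso.exists_upper_bound_of_seq_of_aleph_one {P : Type*} [LinearOrder P]
    {e : P ≃o Iic (Cardinal.aleph.{u} 1).ord} {a : P}
    (ha : (e a : Ordinal) = (Cardinal.aleph 1).ord) (t : ℕ → P) (ht : ∀ n, t n < a) :
    ∃ β < a, ∀ n, t n ≤ β := by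
  have hsup : ⨆ n, (e (t n) : Ordinal) < (Cardinal.aleph 1).ord := by
    simpa only [Cardinal.ord_aleph] using Ordinal.iSup_lt_omega_one fun n ↦
      (Cardinal.ord_aleph 1 ▸ (e.lt_iff_coe_lt_of_apply_eq ha).1 (ht n) :
        (e (t n) : Ordinal) < Ordinal.omega 1)
  obtain ⟨β, hβ⟩ := e.exists_coe_apply_eq hsup.le
  refine ⟨β, (e.lt_iff_coe_lt_of_apply_eq ha).2 (hβ ▸ hsup), fun n ↦ ?_⟩
  rw [← not_lt, e.lt_iff_coe_lt, hβ, not_lt]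
  exact le_ciSup Ordinal.bddAbove_of_small n

/-- The Tychonoff plank `(ω+1) × (ω₁+1)` is not radial at the corner `(ω, ω₁)`:
the set `A := ω × ω₁` has the corner in its closure, but no transfinite sequence
contained in `A` converges to the corner. Here the factors are represented by
linear orders order-isomorphic to `Iic ω` and `Iic ω₁`, each carrying its order
topology, and the product carries the product topology. -/
theorem stmt_3 {P : Type u} {Q : Type u}
    [LinearOrder P] [TopologicalSpace P] [OrderTopology P]
    [LinearOrder Q] [TopologicalSpace Q] [OrderTopology Q]
    (eP : P ≃o Set.Iic Ordinal.omega0.{u})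
    (eQ : Q ≃o Set.Iic (Cardinal.aleph.{u} 1).ord)
    (a : P) (b : Q)
    (ha : (eP a : Ordinal) = Ordinal.omega0)
    (hb : (eQ b : Ordinal) = (Cardinal.aleph 1).ord) :
    (a, b) ∈ closure {p : P × Q | p.1 ≠ a ∧ p.2 ≠ b} ∧
    ¬ ∃ o : Ordinal.{u}, o ≠ 0 ∧ ∃ f : o.ToType → P × Q,
        (∀ i, f i ∈ {p : P × Q | p.1 ≠ a ∧ p.2 ≠ b}) ∧
        Filter.Tendsto f Filter.atTop (nhds (a, b)) := by
  constructor
  · change (a, b) ∈ closure ({x | x ≠ a} ×ˢ {y | y ≠ b})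
    rw [closure_prod_eq]
    exact ⟨closure_mono (fun _ ↦ ne_of_lt) (eP.mem_closure_Iio_of_isSuccLimit ha Ordinal.isSuccLimit_omega0),
      closure_mono (fun _ ↦ ne_of_lt) (eQ.mem_closure_Iio_of_isSuccLimit hb
        (Cardinal.isSuccLimit_ord (Cardinal.aleph0_le_aleph 1)))⟩
  · rintro ⟨o, ho, f, hfA, hf⟩
    have : Nonempty o.ToType := Ordinal.nonempty_toType_iff.mpr ho
    obtain ⟨s, hs, hcof⟩ := OrderIso.exists_seq_cofinal_Iio_of_omega0 ha
    obtain ⟨j, hj⟩ := exists_seq_cofinal_of_tendsto hf.fst_nhds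
      (fun i ↦ OrderIso.lt_of_ne_of_apply_eq ha (hfA i).1) hs hcof
    exact not_tendsto_of_seq_cofinal hj (fun i ↦ OrderIso.lt_of_ne_of_apply_eq hb (hfA i).2)
      (OrderIso.exists_upper_bound_of_seq_of_aleph_one hb) hf.snd_nhds
end

section
/- Let X be a space, x ∈ X, and let (C_i)_{i∈I} be a nest system for x, i.e., a nonempty family of nests (sets of neighbourhoods of x linearly ordered by inclusion) such that the mesh M(C) := { ⋂_{i∈I} C_i : C_i ∈ C_i for each i } is a neighbourhood base at x. Then for all distinct i, j ∈ I, the intersection of the i-th spoke and the j-th spoke equals the neighbourhood core N_x of x, where the i-th spoke is S_i := ⋂_{j ≠ i} ⋂ C_j (interpreted as X when I = {i}) and N_x is the intersection of all neighbourhoods of x. -/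
open Filter Topology Set

universe u v

/-- A nest: a nonempty family of sets linearly ordered by inclusion. -/
def IsNest {X : Type u} (C : Set (Set X)) : Prop :=
  C.Nonempty ∧ IsChain (· ⊆ ·) C

/-- The `i`-th spoke of a family of nests: the intersection of all members of
all the other nests (the whole space when `I` is a singleton). -/
def Spoke {X : Type u} {I : Type v} (C : I → Set (Set X)) (i : I) : Set X :=
  ⋂ j ∈ ({i}ᶜ : Set I), ⋂₀ C j

/-- The neighbourhood core of `x`: the intersection of all neighbourhoods of `x`. -/
def NbhdCore {X : Type u} [TopologicalSpace X] (x : X) : Set X :=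
  ⋂₀ {U | U ∈ nhds x}

/-- A nest system for `x`: a nonempty family of nests of neighbourhoods of `x`
whose mesh `{ ⋂ i, f i : ∀ i, f i ∈ C i }` is a neighbourhood base at `x`. -/
def IsNestSystem {X : Type u} [TopologicalSpace X] {I : Type v} (x : X)
    (C : I → Set (Set X)) : Prop :=
  Nonempty I ∧
  (∀ i, IsNest (C i)) ∧
  (∀ i, ∀ s ∈ C i, s ∈ nhds x) ∧
  (∀ f : I → Set X, (∀ i, f i ∈ C i) → (⋂ i, f i) ∈ nhds x) ∧
  (∀ U ∈ nhds x, ∃ f : I → Set X, (∀ i, f i ∈ C i) ∧ (⋂ i, f i) ⊆ U)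

/-- An independent nest system: a nest system such that every mesh element is
the union of its intersections with the spokes. -/
def IsIndepNestSystem {X : Type u} [TopologicalSpace X] {I : Type v} (x : X)
    (C : I → Set (Set X)) : Prop :=
  IsNestSystem x C ∧
  ∀ f : I → Set X, (∀ i, f i ∈ C i) → (⋂ i, f i) = ⋃ i, (f i ∩ Spoke C i)

theorem subset_spoke_of_subset_sInter {X : Type u} {I : Type v} {C : I → Set (Set X)}
    {S : Set X} {i : I} (hS : ∀ j, j ≠ i → S ⊆ ⋂₀ C j) : S ⊆ Spoke C i :=
  subset_iInter₂ hS

theorem nbhdCore_subset_sInter {X : Type u} [TopologicalSpace X] {x : X} {C : Set (Set X)}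
    (hC : ∀ s ∈ C, s ∈ 𝓝 x) : NbhdCore x ⊆ ⋂₀ C :=
  subset_sInter fun s hs => sInter_subset_of_mem (hC s hs)

/-- Each nest is missed by at most one of two distinct spokes, so their intersection lies in
every mesh element. -/
theorem spoke_inter_spoke_subset_iInter {X : Type u} {I : Type v} {C : I → Set (Set X)}
    {i j : I} (hij : i ≠ j) {f : I → Set X} (hf : ∀ k, f k ∈ C k) :
    Spoke C i ∩ Spoke C j ⊆ ⋂ k, f k := by
  rintro y ⟨hi, hj⟩
  refine mem_iInter.mpr fun k => ?_
  rcases hij.ne_or_ne k with hik | hjk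
  · exact mem_iInter₂.mp hi k hik.symm _ (hf k)
  · exact mem_iInter₂.mp hj k hjk.symm _ (hf k)

theorem IsNestSystem.spoke_inter_spoke_subset_nbhdCore {X : Type u} [TopologicalSpace X]
    {I : Type v} {x : X} {C : I → Set (Set X)} (h : IsNestSystem x C) {i j : I} (hij : i ≠ j) :
    Spoke C i ∩ Spoke C j ⊆ NbhdCore x :=
  subset_sInter fun U hU => by
    obtain ⟨f, hf, hfU⟩ := h.2.2.2.2 U hU
    exact (spoke_inter_spoke_subset_iInter hij hf).trans hfU

theorem IsNestSystem.nbhdCore_subset_spoke {X : Type u} [TopologicalSpace X] {I : Type v}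
    {x : X} {C : I → Set (Set X)} (h : IsNestSystem x C) (i : I) :
    NbhdCore x ⊆ Spoke C i :=
  subset_spoke_of_subset_sInter fun j _ => nbhdCore_subset_sInter (h.2.2.1 j)

/-- Lemma 3.8: for a nest system, the intersection of two distinct spokes is the
neighbourhood core. -/
theorem stmt_5 {X : Type u} [TopologicalSpace X] {I : Type v} (x : X)
    (C : I → Set (Set X)) (h : IsNestSystem x C) :
    ∀ i j : I, i ≠ j → Spoke C i ∩ Spoke C j = NbhdCore x :=
  fun i j hij => (h.spoke_inter_spoke_subset_nbhdCore hij).antisymm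
    (subset_inter (h.nbhdCore_subset_spoke i) (h.nbhdCore_subset_spoke j))
end

section
/- If x is a point of a topological space X admitting an independent nest system, then X is radial at x. -/
open Filter Topology Set

universe u v

/-!
Independence covers every mesh element by its traces on the spokes, so if `x ∈ closure A` then
already `x ∈ closure (A ∩ S i)` for a single spoke `S i`. Within `S i` the traces of the nest
`C i` alone form a neighbourhood base at `x`, and a nest has a well-ordered coinitial subfamily;
a point of `A ∩ S i` in each of its members is a transfinite sequence converging to `x`.
-/

theorem exists_ordinal_monotone_isCofinal_range {α : Type u} [LinearOrder α] [Nonempty α] :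
    ∃ o : Ordinal.{u}, o ≠ 0 ∧ ∃ g : o.ToType → α,
      Monotone g ∧ IsCofinal (range g) := by
  let r : α → α → Prop := WellOrderingRel
  -- on the records of a well-ordering, `<` refines that well-ordering, hence is well-founded
  let s : Set α := {a | ∀ b, r b a → b < a}
  have hs : IsCofinal s := isCofinal_setOfPred_imp_lt r
  have : WellFoundedLT s := by
    refine ⟨Subrelation.wf (fun {a b} hab => ?_)
      (InvImage.wf ((↑) : s → α) WellOrderingRel.isWellOrder.wf)⟩
    rcases trichotomous_of r a.1 b.1 with h | h | h
    · exact h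
    · exact absurd (Subtype.ext h ▸ hab) (lt_irrefl b)
    · exact absurd (a.2 _ h) (not_lt_of_gt hab)
  have : Nonempty s := hs.nonempty.to_subtype
  let o := Ordinal.type ((· < ·) : s → s → Prop)
  obtain ⟨e⟩ := Ordinal.type_eq.1 (Ordinal.type_toType o)
  let e' : o.ToType ≃o s := .ofRelIsoLT e
  refine ⟨o, Ordinal.type_ne_zero_iff_nonempty.2 ‹_›, (↑) ∘ e',
    (Subtype.mono_coe _).comp e'.monotone, ?_⟩
  rwa [range_comp, e'.range_eq, image_univ, Subtype.range_coe]

theorem IsChain.exists_ordinal_monotone_cofinal {α : Type u} [PartialOrder α] {D : Set α}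
    (hD : IsChain (· ≤ ·) D) (hne : D.Nonempty) :
    ∃ o : Ordinal.{u}, o ≠ 0 ∧ ∃ g : o.ToType → α,
      Monotone g ∧ (∀ a, g a ∈ D) ∧ ∀ d ∈ D, ∃ a, d ≤ g a := by
  classical
  let := hD.linearOrder
  have : Nonempty D := hne.to_subtype
  obtain ⟨o, ho, g, hg, hcof⟩ := exists_ordinal_monotone_isCofinal_range (α := D)
  refine ⟨o, ho, fun a => (g a : α), fun a b hab => hg hab, fun a => (g a).2, fun d hd => ?_⟩
  obtain ⟨_, ⟨a, rfl⟩, hda⟩ := hcof ⟨d, hd⟩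
  exact ⟨a, hda⟩

theorem IsNest.exists_ordinal_antitone_coinitial {X : Type u} {D : Set (Set X)} (hD : IsNest D) :
    ∃ o : Ordinal.{u}, o ≠ 0 ∧ ∃ g : o.ToType → Set X,
      Antitone g ∧ (∀ a, g a ∈ D) ∧ ∀ d ∈ D, ∃ a, g a ⊆ d :=
  IsChain.exists_ordinal_monotone_cofinal (α := (Set X)ᵒᵈ) hD.2.symm hD.1

theorem exists_tendsto_nhds_of_antitone_inter_basis {X : Type u} [TopologicalSpace X] {ι : Type*}
    [Preorder ι] {x : X} {A S : Set X} {g : ι → Set X} (hg : Antitone g)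
    (hgx : ∀ a, g a ∈ 𝓝 x) (hbasis : ∀ U ∈ 𝓝 x, ∃ a, g a ∩ S ⊆ U)
    (hA : x ∈ closure (A ∩ S)) :
    ∃ f : ι → X, (∀ a, f a ∈ A) ∧ Tendsto f atTop (𝓝 x) := by
  choose f hf using fun a => mem_closure_iff_nhds.1 hA (g a) (hgx a)
  refine ⟨f, fun a => (hf a).2.1, fun U hU => ?_⟩
  obtain ⟨a, ha⟩ := hbasis U hU
  exact mem_map.2 <| mem_of_superset (mem_atTop a) fun b hab => ha ⟨hg hab (hf b).1, (hf b).2.2⟩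

namespace IsIndepNestSystem

variable {X : Type u} [TopologicalSpace X] {I : Type v} {x : X} {C : I → Set (Set X)}

theorem inter_spoke_subset_iInter (h : IsIndepNestSystem x C) {f : I → Set X}
    (hf : ∀ i, f i ∈ C i) (i : I) : f i ∩ Spoke C i ⊆ ⋂ j, f j := by
  rw [h.2 f hf]
  exact subset_iUnion (fun j => f j ∩ Spoke C j) i

theorem exists_inter_spoke_subset (h : IsIndepNestSystem x C) (i : I) {U : Set X}
    (hU : U ∈ 𝓝 x) : ∃ c ∈ C i, c ∩ Spoke C i ⊆ U := by
  obtain ⟨-, -, -, -, hbase⟩ := h.1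
  obtain ⟨f, hf, hfU⟩ := hbase U hU
  exact ⟨f i, hf i, (h.inter_spoke_subset_iInter hf i).trans hfU⟩

theorem exists_mem_closure_inter_spoke (h : IsIndepNestSystem x C) {A : Set X}
    (hA : x ∈ closure A) : ∃ i, x ∈ closure (A ∩ Spoke C i) := by
  by_contra! hcon
  have hc i : ∃ c ∈ C i, c ∩ Spoke C i ∩ A = ∅ := by
    obtain ⟨U, hU, hUA⟩ : ∃ U ∈ 𝓝 x, U ∩ (A ∩ Spoke C i) = ∅ := by
      simpa [mem_closure_iff_nhds, not_nonempty_iff_eq_empty] using hcon i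
    obtain ⟨c, hcC, hcU⟩ := h.exists_inter_spoke_subset i hU
    exact ⟨c, hcC, subset_empty_iff.1 fun y hy => hUA ▸ ⟨hcU hy.1, hy.2, hy.1.2⟩⟩
  choose c hcC hcA using hc
  obtain ⟨⟨-, -, -, hmesh, -⟩, hindep⟩ := h
  obtain ⟨y, hyc, hyA⟩ := mem_closure_iff_nhds.1 hA _ (hmesh c hcC)
  rw [hindep c hcC, mem_iUnion] at hyc
  obtain ⟨i, hyi⟩ := hyc
  exact (hcA i).subset ⟨hyi, hyA⟩

end IsIndepNestSystem

/-- Theorem 3.9: if a point admits an independent nest system, then the space is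
radial at that point. -/
theorem stmt_6 {X : Type u} [TopologicalSpace X] {I : Type v} (x : X)
    (C : I → Set (Set X)) (h : IsIndepNestSystem x C) :
    RadialAt x := by
  intro A hA
  obtain ⟨-, hnest, hnhds, -, -⟩ := h.1
  obtain ⟨i, hi⟩ := h.exists_mem_closure_inter_spoke hA
  obtain ⟨o, ho, g, hg, hgC, hgcof⟩ := (hnest i).exists_ordinal_antitone_coinitial
  have hbasis U (hU : U ∈ 𝓝 x) : ∃ a, g a ∩ Spoke C i ⊆ U := by
    obtain ⟨c, hcC, hcU⟩ := h.exists_inter_spoke_subset i hU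
    obtain ⟨a, ha⟩ := hgcof c hcC
    exact ⟨a, (inter_subset_inter_left _ ha).trans hcU⟩
  obtain ⟨f, hfA, hf⟩ :=
    exists_tendsto_nhds_of_antitone_inter_basis hg (fun a => hnhds i _ (hgC a)) hbasis hi
  exact ⟨o, ho, f, hfA, hf⟩
end

section
/- Being independently-based is a hereditary property: if x ∈ Y ⊆ X and x has an independent nest system with respect to X, then x has an independent nest system with respect to the subspace Y (obtained by intersecting each member of each nest with Y). -/
open Filter Topology Set

universe u v

variable {X : Type u} {Y : Type*} {I : Type v}

theorem IsNest.image_preimage {C : Set (Set X)} (hC : IsNest C) (f : Y → X) :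
    IsNest (preimage f '' C) :=
  ⟨hC.1.image _, hC.2.image_of_map_rel _ _ _ fun _ _ h => preimage_mono h⟩

theorem spoke_image_preimage (C : I → Set (Set X)) (f : Y → X) (i : I) :
    Spoke (fun i => preimage f '' C i) i = f ⁻¹' Spoke C i := by
  simp only [Spoke, preimage_iInter₂, sInter_image, preimage_sInter]

variable [TopologicalSpace X] [TopologicalSpace Y] {f : Y → X}

theorem IsNestSystem.comap {y : Y} {C : I → Set (Set X)} (h : IsNestSystem (f y) C)
    (hf : IsInducing f) : IsNestSystem y (fun i => preimage f '' C i) := by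
  obtain ⟨hI, hnest, hnhds, hmesh, hbase⟩ := h
  refine ⟨hI, fun i => (hnest i).image_preimage f, ?_, ?_, ?_⟩
  · rintro i _ ⟨c, hc, rfl⟩
    exact hf.continuous.continuousAt.preimage_mem_nhds (hnhds i c hc)
  · intro g hg
    choose c hc hcg using hg
    obtain rfl : (fun i => f ⁻¹' c i) = g := funext hcg
    rw [← preimage_iInter]
    exact hf.continuous.continuousAt.preimage_mem_nhds (hmesh c hc)
  · intro U hU
    rw [hf.nhds_eq_comap y, mem_comap] at hU
    obtain ⟨V, hV, hVU⟩ := hU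
    obtain ⟨c, hc, hcV⟩ := hbase V hV
    refine ⟨fun i => f ⁻¹' c i, fun i => mem_image_of_mem _ (hc i), ?_⟩
    rw [← preimage_iInter]
    exact (preimage_mono hcV).trans hVU

theorem IsIndepNestSystem.comap {y : Y} {C : I → Set (Set X)}
    (h : IsIndepNestSystem (f y) C) (hf : IsInducing f) :
    IsIndepNestSystem y (fun i => preimage f '' C i) := by
  refine ⟨h.1.comap hf, fun g hg => ?_⟩
  choose c hc hcg using hg
  obtain rfl : (fun i => f ⁻¹' c i) = g := funext hcg
  simp only [spoke_image_preimage, ← preimage_inter, ← preimage_iInter, ← preimage_iUnion,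
    h.2 c hc]

/-- Lemma 3.3 / Corollary 3.4: being independently-based is hereditary. If
`x ∈ Y ⊆ X` and `x` has an independent nest system in `X`, then the traces on `Y`
of its nests form an independent nest system for `x` in the subspace `Y`. -/
theorem stmt_7 {X : Type u} [TopologicalSpace X] {I : Type v} (Y : Set X) (x : X)
    (hx : x ∈ Y) (C : I → Set (Set X)) (h : IsIndepNestSystem x C) :
    IsIndepNestSystem (X := Y) ⟨x, hx⟩
      (fun i => (fun c => (Subtype.val ⁻¹' c : Set Y)) '' C i) :=
  h.comap (y := (⟨x, hx⟩ : Y)) IsInducing.subtypeVal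
end

section
/- Every linearly ordered topological space (a linear order with its order topology) is independently-based: each point x admits an independent nest system, which when the order is unbounded above and below is given by the two nests C_0 := {(y,∞) : y < x} and C_1 := {(-∞,z) : z > x}. -/
open Filter Topology Set

universe u v

/-! At `x` take the nest of rays `(y, ∞)` with `y < x` and the nest of rays `(-∞, z)` with
`z > x`, each together with the whole space so that it is nonempty even when `x` is an endpoint.
Meshes are then the open intervals and rays containing `x` (and `X` itself), which form a
neighbourhood base of the order topology. Independence holds because the two spokes cover `X`:
a point `w ≤ x` lies in every right ray and a point `w ≥ x` in every left ray. -/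

section NestSystem

variable {X : Type u} {I : Type v}

lemma isNest_insert_univ {C : Set (Set X)} (hC : IsChain (· ⊆ ·) C) :
    IsNest (insert univ C) :=
  ⟨insert_nonempty _ _, hC.insert fun s _ _ => Or.inr (subset_univ s)⟩

lemma IsNest.hasBasis_biInf_principal {C : Set (Set X)} (hC : IsNest C) :
    (⨅ s ∈ C, 𝓟 s).HasBasis (· ∈ C) id :=
  Filter.hasBasis_biInf_principal (IsChain.directedOn (r := fun s t : Set X => s ⊇ t) hC.2.symm)
    hC.1

lemma isNestSystem_of_nhds_eq_iInf [TopologicalSpace X] [Finite I] [Nonempty I] {x : X}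
    {C : I → Set (Set X)} (hC : ∀ i, IsNest (C i)) (hx : 𝓝 x = ⨅ i, ⨅ s ∈ C i, 𝓟 s) :
    IsNestSystem x C := by
  have mem_nhds : ∀ i, ∀ s ∈ C i, s ∈ 𝓝 x := fun i s hs =>
    hx ▸ mem_iInf_of_mem i ((hC i).hasBasis_biInf_principal.mem_of_mem hs)
  refine ⟨‹_›, hC, mem_nhds, fun f hf => iInter_mem.2 fun i => mem_nhds i _ (hf i), ?_⟩
  intro U hU
  obtain ⟨t, ht, rfl⟩ := (mem_iInf_of_finite U).1 (hx ▸ hU)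
  choose f hf hft using fun i => ((hC i).hasBasis_biInf_principal.mem_iff).1 (ht i)
  exact ⟨f, hf, iInter_mono hft⟩

lemma iUnion_inter_spoke_subset_iInter {C : I → Set (Set X)} {f : I → Set X}
    (hf : ∀ i, f i ∈ C i) : ⋃ i, (f i ∩ Spoke C i) ⊆ ⋂ i, f i := by
  classical
  rintro w ⟨_, ⟨i, rfl⟩, hwi, hws⟩
  refine mem_iInter.2 fun j => if hji : j = i then hji ▸ hwi else ?_
  exact mem_iInter₂.1 hws j hji (f j) (hf j)

lemma iInter_eq_iUnion_inter_spoke {C : I → Set (Set X)} (hcover : ⋃ i, Spoke C i = univ)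
    {f : I → Set X} (hf : ∀ i, f i ∈ C i) : ⋂ i, f i = ⋃ i, (f i ∩ Spoke C i) := by
  refine Subset.antisymm (fun w hw => ?_) (iUnion_inter_spoke_subset_iInter hf)
  obtain ⟨i, hi⟩ := mem_iUnion.1 (hcover.superset (mem_univ w))
  exact mem_iUnion.2 ⟨i, mem_iInter.1 hw i, hi⟩

lemma spoke_ulift_bool (C : ULift.{v} Bool → Set (Set X)) (b : Bool) :
    Spoke C ⟨b⟩ = ⋂₀ C ⟨!b⟩ := by
  ext w
  cases b <;> simp [Spoke, ULift.forall]

end NestSystem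

section OrderTopology

variable {X : Type u} [LinearOrder X]

def lowerNest (x : X) : Set (Set X) := insert univ (Ioi '' Iio x)

def upperNest (x : X) : Set (Set X) := insert univ (Iio '' Ioi x)

lemma isNest_lowerNest (x : X) : IsNest (lowerNest x) :=
  isNest_insert_univ (antitone_Ioi.isChain_image (isChain_of_trichotomous _))

lemma isNest_upperNest (x : X) : IsNest (upperNest x) :=
  isNest_insert_univ (monotone_Iio.isChain_image (isChain_of_trichotomous _))

lemma biInf_principal_lowerNest (x : X) :
    ⨅ s ∈ lowerNest x, 𝓟 s = ⨅ y ∈ Iio x, 𝓟 (Ioi y) := by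
  simp only [lowerNest, iInf_insert, principal_univ, top_inf_eq, iInf_image]

lemma biInf_principal_upperNest (x : X) :
    ⨅ s ∈ upperNest x, 𝓟 s = ⨅ z ∈ Ioi x, 𝓟 (Iio z) := by
  simp only [upperNest, iInf_insert, principal_univ, top_inf_eq, iInf_image]

lemma Ici_subset_sInter_lowerNest (x : X) : Ici x ⊆ ⋂₀ lowerNest x := by
  rintro w hw _ (rfl | ⟨y, hy, rfl⟩)
  exacts [mem_univ w, hy.trans_le hw]

lemma Iic_subset_sInter_upperNest (x : X) : Iic x ⊆ ⋂₀ upperNest x := by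
  rintro w hw _ (rfl | ⟨z, hz, rfl⟩)
  exacts [mem_univ w, hw.trans_lt hz]

def orderNestFamily (x : X) : ULift.{u} Bool → Set (Set X) :=
  fun i => cond i.down (upperNest x) (lowerNest x)

lemma isNest_orderNestFamily (x : X) (i : ULift.{u} Bool) : IsNest (orderNestFamily x i) := by
  rcases i with ⟨_ | _⟩
  exacts [isNest_lowerNest x, isNest_upperNest x]

lemma nhds_eq_iInf_orderNestFamily [TopologicalSpace X] [OrderTopology X] (x : X) :
    𝓝 x = ⨅ i, ⨅ s ∈ orderNestFamily x i, 𝓟 s := by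
  rw [nhds_eq_order, ← biInf_principal_lowerNest, ← biInf_principal_upperNest, iInf_ulift,
    iInf_bool_eq, inf_comm]
  rfl

lemma iUnion_spoke_orderNestFamily (x : X) : ⋃ i, Spoke (orderNestFamily x) i = univ := by
  refine eq_univ_of_forall fun w => mem_iUnion.2 ?_
  rcases le_total w x with hwx | hxw
  · exact ⟨⟨false⟩, (spoke_ulift_bool _ false).symm ▸ Iic_subset_sInter_upperNest x hwx⟩
  · exact ⟨⟨true⟩, (spoke_ulift_bool _ true).symm ▸ Ici_subset_sInter_lowerNest x hxw⟩

end OrderTopology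

/-- Theorem 3.6: every linearly ordered topological space is independently-based:
each point admits an independent nest system. -/
theorem stmt_8 {X : Type u} [LinearOrder X] [TopologicalSpace X] [OrderTopology X]
    (x : X) :
    ∃ (I : Type u) (C : I → Set (Set X)), IsIndepNestSystem x C :=
  ⟨_, orderNestFamily x,
    isNestSystem_of_nhds_eq_iInf (isNest_orderNestFamily x) (nhds_eq_iInf_orderNestFamily x),
    fun _ => iInter_eq_iUnion_inter_spoke (iUnion_spoke_orderNestFamily x)⟩
end

section
/- Let X be a space and x ∈ X. If x admits a spoke system, i.e., a nonempty family (S_i)_{i∈I} of subspaces each containing the neighbourhood core N_x, each well-based at x in the subspace topology, and such that { ⋃_{i∈I} U_i : U_i a neighbourhood of x in S_i } is a neighbourhood base at x in X, then X is radial at x. -/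
open Filter Topology Set

universe u v

/-- A set `U ⊆ S` is a neighbourhood of `x` in the subspace `S` iff `U ∈ 𝓝[S] x`.
`S` is well-based at `x` if `x` has a neighbourhood base in the subspace `S`
well-ordered by reverse inclusion. -/
def WellBasedWithin {X : Type u} [TopologicalSpace X] (x : X) (S : Set X) : Prop :=
  ∃ B : Set (Set X),
    (∀ b ∈ B, b ⊆ S ∧ b ∈ nhdsWithin x S) ∧
    (∀ U, U ⊆ S → U ∈ nhdsWithin x S → ∃ b ∈ B, b ⊆ U) ∧
    IsChain (· ⊆ ·) B ∧ B.WellFoundedOn (fun a b => b ⊂ a)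

/-- A spoke system for `x`: a nonempty family of subspaces, each containing the
neighbourhood core and well-based at `x`, such that the unions of subspace
neighbourhoods of `x` form a neighbourhood base at `x`. -/
def IsSpokeSystem {X : Type u} [TopologicalSpace X] {I : Type v} (x : X)
    (S : I → Set X) : Prop :=
  Nonempty I ∧
  (∀ i, NbhdCore x ⊆ S i) ∧
  (∀ i, x ∈ S i) ∧
  (∀ i, WellBasedWithin x (S i)) ∧
  (∀ U : I → Set X, (∀ i, U i ⊆ S i ∧ U i ∈ nhdsWithin x (S i)) →
    (⋃ i, U i) ∈ nhds x) ∧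
  (∀ V ∈ nhds x, ∃ U : I → Set X,
    (∀ i, U i ⊆ S i ∧ U i ∈ nhdsWithin x (S i)) ∧ (⋃ i, U i) ⊆ V)

/-- An independent spoke system: distinct spokes meet exactly in the
neighbourhood core. -/
def IsIndepSpokeSystem {X : Type u} [TopologicalSpace X] {I : Type v} (x : X)
    (S : I → Set X) : Prop :=
  IsSpokeSystem x S ∧ ∀ i j : I, i ≠ j → S i ∩ S j = NbhdCore x

/-- `X` is strongly Fréchet at `x`. -/
def StronglyFrechetAt {X : Type u} [TopologicalSpace X] (x : X) : Prop :=
  ∀ A : ℕ → Set X, Antitone A → (∀ n, x ∈ closure (A n)) →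
    ∃ u : ℕ → X, (∀ n, u n ∈ A n) ∧ Filter.Tendsto u Filter.atTop (nhds x)

/-- `X` is first-countable at `x`: `x` has a countable neighbourhood base. -/
def FirstCountableAt {X : Type u} [TopologicalSpace X] (x : X) : Prop :=
  ∃ B : Set (Set X), B.Countable ∧ (∀ b ∈ B, b ∈ nhds x) ∧
    ∀ U ∈ nhds x, ∃ b ∈ B, b ⊆ U

/-! Since the unions of spoke neighbourhoods form a base at `x`, a set `A` with `x` in its
closure must accumulate at `x` inside a single spoke `S i`. Choosing a point of `A` in each
member of the well-ordered base of `S i` at `x` gives a net indexed by that well order, and it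
converges to `x` because the base is decreasing; re-indexing by the order type yields an
ordinal-indexed net. -/

theorem Ordinal.exists_ne_zero_orderIso_toType (ι : Type u) [LinearOrder ι] [WellFoundedLT ι]
    [Nonempty ι] : ∃ o : Ordinal.{u}, o ≠ 0 ∧ Nonempty (o.ToType ≃o ι) :=
  ⟨Ordinal.type (α := ι) (· < ·), Ordinal.type_ne_zero_of_nonempty _,
    ⟨OrderIso.ofRelIsoLT (Ordinal.type_eq.mp (Ordinal.type_toType _)).some⟩⟩

theorem exists_ordinal_tendsto_of_hasBasis {Y : Type u} {F : Filter Y} {B : Set (Set Y)}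
    (hF : F.HasBasis (· ∈ B) id) (hchain : IsChain (· ⊆ ·) B)
    (hwf : B.WellFoundedOn fun a b => b ⊂ a) {A : Set Y} (hA : ∃ᶠ y in F, y ∈ A) :
    ∃ o : Ordinal.{u}, o ≠ 0 ∧ ∃ f : o.ToType → Y, (∀ a, f a ∈ A) ∧ Tendsto f atTop F := by
  classical
  -- `B` seen inside `(Set Y)ᵒᵈ`, so that `<` on the index type is reverse strict inclusion
  let ι := OrderDual.ofDual ⁻¹' B
  let _ : LinearOrder ι := IsChain.linearOrder hchain.symm
  have : WellFoundedLT ι := ⟨hwf⟩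
  have hpt (b : ι) : ∃ y ∈ A, y ∈ OrderDual.ofDual b.1 :=
    (Filter.frequently_iff.mp hA (hF.mem_of_mem b.2)).imp fun _ h => ⟨h.2, h.1⟩
  choose g hgA hgb using hpt
  obtain ⟨b₀, hb₀, -⟩ := hF.mem_iff.mp univ_mem
  have : Nonempty ι := ⟨⟨OrderDual.toDual b₀, hb₀⟩⟩
  have hg : Tendsto g atTop F := hF.tendsto_right_iff.mpr fun b hb =>
    eventually_atTop.mpr ⟨⟨OrderDual.toDual b, hb⟩, fun c hc => hc (hgb c)⟩
  obtain ⟨o, ho, ⟨e⟩⟩ := Ordinal.exists_ne_zero_orderIso_toType ι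
  exact ⟨o, ho, g ∘ e, fun a => hgA _, hg.comp e.tendsto_atTop⟩

theorem WellBasedWithin.exists_hasBasis {X : Type u} [TopologicalSpace X] {x : X} {S : Set X}
    (h : WellBasedWithin x S) : ∃ B : Set (Set X), (𝓝[S] x).HasBasis (· ∈ B) id ∧
      IsChain (· ⊆ ·) B ∧ B.WellFoundedOn fun a b => b ⊂ a := by
  obtain ⟨B, hBnhds, hBbase, hchain, hwf⟩ := h
  refine ⟨B, ⟨fun U => ⟨fun hU => ?_, fun ⟨b, hb, hbU⟩ => mem_of_superset (hBnhds b hb).2 hbU⟩⟩,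
    hchain, hwf⟩
  obtain ⟨b, hb, hbU⟩ := hBbase (U ∩ S) inter_subset_right (inter_mem hU self_mem_nhdsWithin)
  exact ⟨b, hb, hbU.trans inter_subset_left⟩

theorem IsSpokeSystem.exists_frequently_mem {X : Type u} [TopologicalSpace X] {I : Type v}
    {x : X} {S : I → Set X} (h : IsSpokeSystem x S) {A : Set X} (hA : x ∈ closure A) :
    ∃ i, ∃ᶠ y in 𝓝[S i] x, y ∈ A := by
  by_contra! hnot
  have hU : (⋃ i, S i ∩ {y | y ∉ A}) ∈ 𝓝 x :=
    h.2.2.2.2.1 _ fun i => ⟨inter_subset_left, inter_mem self_mem_nhdsWithin (hnot i)⟩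
  obtain ⟨y, hy, hyA⟩ := mem_closure_iff_nhds.mp hA _ hU
  obtain ⟨i, -, hyA'⟩ := mem_iUnion.mp hy
  exact hyA' hyA

/-- If `x` admits a spoke system, then `X` is radial at `x`. -/
theorem stmt_11 {X : Type u} [TopologicalSpace X] {I : Type v} (x : X)
    (S : I → Set X) (h : IsSpokeSystem x S) : RadialAt x := by
  intro A hA
  obtain ⟨i, hi⟩ := h.exists_frequently_mem hA
  obtain ⟨B, hB, hchain, hwf⟩ := (h.2.2.2.1 i).exists_hasBasis
  obtain ⟨o, ho, f, hfA, hf⟩ := exists_ordinal_tendsto_of_hasBasis hB hchain hwf hi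
  exact ⟨o, ho, f, hfA, hf.mono_right nhdsWithin_le_nhds⟩
end

section
/- Let X be a space and x ∈ X admit a finite independent spoke system whose spokes are all first-countable at x (i.e., x has a countable neighbourhood base in each spoke). Then X is first-countable at x. -/
/-!
Choosing, for each spoke, one member of a countable base of `x` in that spoke gives a union
`⋃ i, b i`; these unions form a neighbourhood base at `x` because the spokes do, and since
there are finitely many spokes there are only countably many such choices.
-/

open Filter Topology Set

universe u v

theorem IsSpokeSystem.firstCountableAt {X : Type u} [TopologicalSpace X] {I : Type v}
    [Finite I] {x : X} {S : I → Set X} (hS : IsSpokeSystem x S) {B : I → Set (Set X)}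
    (hBc : ∀ i, (B i).Countable) (hBnhds : ∀ i, ∀ b ∈ B i, b ⊆ S i ∧ b ∈ 𝓝[S i] x)
    (hBbase : ∀ i U, U ⊆ S i → U ∈ 𝓝[S i] x → ∃ b ∈ B i, b ⊆ U) :
    FirstCountableAt x := by
  obtain ⟨-, -, -, -, hunion, hbase⟩ := hS
  refine ⟨(fun b : I → Set X => ⋃ i, b i) '' univ.pi B, (countable_univ_pi hBc).image _,
    ?_, ?_⟩
  · rintro _ ⟨b, hb, rfl⟩
    exact hunion b fun i => hBnhds i _ (hb i trivial)
  · intro V hV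
    obtain ⟨U, hU, hUV⟩ := hbase V hV
    choose b hb hbU using fun i => hBbase i (U i) (hU i).1 (hU i).2
    exact ⟨⋃ i, b i, mem_image_of_mem _ fun i _ => hb i, (iUnion_mono hbU).trans hUV⟩

/-- Lemma 4.3: if `x` admits a finite independent spoke system whose spokes are
all first-countable at `x`, then `X` is first-countable at `x`. -/
theorem stmt_15 {X : Type u} [TopologicalSpace X] {I : Type v} [Finite I] (x : X)
    (S : I → Set X) (h : IsIndepSpokeSystem x S)
    (hfc : ∀ i, ∃ B : Set (Set X), B.Countable ∧
      (∀ b ∈ B, b ⊆ S i ∧ b ∈ nhdsWithin x (S i)) ∧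
      ∀ U, U ⊆ S i → U ∈ nhdsWithin x (S i) → ∃ b ∈ B, b ⊆ U) :
    FirstCountableAt x := by
  choose B hBc hBnhds hBbase using hfc
  exact h.1.firstCountableAt hBc hBnhds hBbase
end

section
/- Let X be a topological space and x ∈ X. If x admits an independent spoke system and X is strongly Fréchet at x, then X is first-countable at x. Consequently, X is first-countable at x if and only if x admits an independent spoke system and X is strongly Fréchet at x. -/
open Filter Topology Set

universe u v

/-!
A point with a countable neighbourhood base is strongly Fréchet, and the whole space is a single
spoke. Conversely, strong Fréchetness first turns each well-based spoke into a spoke with a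
decreasing sequence `V i n` of subspace neighbourhoods as base: a well-ordered base without a
countable coinitial part would be avoided by some sequence converging to `x` from outside the
neighbourhood core. If the sets `⋃ i, V i n` failed to be a base, some `U` would be escaped at
every depth `n` by a spoke; picking points of those spokes near `x` gives a sequence converging
to `x` that visits each spoke only finitely often, and removing these finitely many points from
each spoke leaves a neighbourhood of `x` (spokes only meet in the core) that the sequence never
enters.
-/

namespace Filter

variable {α : Type*} {f : Filter α}

theorem eq_principal_ker_of_ker_mem (hk : f.ker ∈ f) : f = 𝓟 f.ker :=
  le_antisymm (le_principal_iff.2 hk) (giPrincipalKer.gc.l_u_le f)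

theorem compl_mem_of_finite_of_disjoint_ker {s : Set α} (hs : s.Finite) (hd : Disjoint s f.ker) :
    sᶜ ∈ f := by
  rw [← biUnion_of_singleton s, compl_iUnion₂]
  refine (biInter_mem hs).2 fun a ha => ?_
  obtain ⟨t, ht, hat⟩ : ∃ t ∈ f, a ∉ t := by
    simpa only [mem_ker, not_forall, exists_prop] using disjoint_left.1 hd ha
  exact mem_of_superset ht fun b hb hba => hat (hba ▸ hb)

theorem exists_antitone_basis_subset_and_eq_ker [f.IsCountablyGenerated] {s : Set α}
    (hs : s ∈ f) :
    ∃ V : ℕ → Set α, f.HasAntitoneBasis V ∧ (∀ n, V n ⊆ s) ∧ (f.ker ∈ f → ∀ n, V n = f.ker) := by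
  by_cases hk : f.ker ∈ f
  · refine ⟨fun _ => f.ker, ⟨⟨fun t => ?_⟩, antitone_const⟩, fun _ => ?_, fun _ _ => rfl⟩
    · exact ⟨fun ht => ⟨0, trivial, subset_ker.1 Subset.rfl t ht⟩,
        fun ⟨_, _, hkt⟩ => mem_of_superset hk hkt⟩
    · exact subset_ker.1 Subset.rfl s hs
  · obtain ⟨V, hV⟩ := f.exists_antitone_basis
    refine ⟨fun n => V n ∩ s, ⟨⟨fun t => ?_⟩, fun m n hmn => inter_subset_inter_left s (hV.2 hmn)⟩,
      fun _ => inter_subset_right, fun h => absurd h hk⟩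
    refine ⟨fun ht => ?_, fun ⟨n, _, hnt⟩ => mem_of_superset (inter_mem (hV.mem n) hs) hnt⟩
    obtain ⟨n, hn⟩ := hV.mem_iff.1 ht
    exact ⟨n, trivial, inter_subset_left.trans hn⟩

end Filter

section

variable {X : Type u} [TopologicalSpace X] {x : X}

theorem ker_nhdsWithin (s : Set X) : (𝓝[s] x).ker = NbhdCore x ∩ s := by
  rw [nhdsWithin, ker_inf, ker_principal]
  rfl

theorem mem_closure_sdiff_ker {F : Filter X} (hF : F ≤ 𝓝 x) (hk : F.ker ∉ F) {s : Set X}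
    (hs : s ∈ F) : x ∈ closure (s \ F.ker) := by
  refine mem_closure_iff_nhds.2 fun t ht => ?_
  have hts : t ∩ s ∈ F := inter_mem (hF ht) hs
  obtain ⟨y, hy, hyk⟩ := not_subset.1 fun h => hk (mem_of_superset hts h)
  exact ⟨y, hy.1, hy.2, hyk⟩

theorem firstCountableAt_iff_isCountablyGenerated :
    FirstCountableAt x ↔ (𝓝 x).IsCountablyGenerated := by
  constructor
  · rintro ⟨B, hB, hmem, hbase⟩
    refine HasCountableBasis.isCountablyGenerated (p := (· ∈ B)) (s := id)
      ⟨⟨fun t => ⟨fun ht => hbase t ht, fun ⟨b, hb, hbt⟩ => mem_of_superset (hmem b hb) hbt⟩⟩, hB⟩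
  · intro
    obtain ⟨C, hC⟩ := (𝓝 x).exists_antitone_basis
    exact ⟨range C, countable_range C, forall_mem_range.2 hC.mem, fun U hU =>
      let ⟨n, hn⟩ := hC.mem_iff.1 hU
      ⟨C n, mem_range_self n, hn⟩⟩

theorem stronglyFrechetAt_of_isCountablyGenerated [(𝓝 x).IsCountablyGenerated] :
    StronglyFrechetAt x := by
  obtain ⟨C, hC⟩ := (𝓝 x).exists_antitone_basis
  intro A _ hA
  choose u hu using fun n => mem_closure_iff_nhds.1 (hA n) (C n) (hC.mem n)
  exact ⟨u, fun n => (hu n).2, hC.tendsto fun n => (hu n).1⟩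

theorem wellBasedWithin_univ_of_isCountablyGenerated [(𝓝 x).IsCountablyGenerated] :
    WellBasedWithin x (univ : Set X) := by
  obtain ⟨C, hC⟩ := (𝓝 x).exists_antitone_basis
  refine ⟨range C, forall_mem_range.2 fun n => ⟨subset_univ _, by simpa using hC.mem n⟩,
    fun U _ hU => ?_, hC.antitone.isChain_range, ?_⟩
  · obtain ⟨n, hn⟩ := hC.mem_iff.1 (by simpa using hU)
    exact ⟨C n, mem_range_self n, hn⟩
  · rw [← image_univ, wellFoundedOn_image, wellFoundedOn_univ]
    refine Subrelation.wf (fun {m n} hmn => ?_) (wellFounded_lt (α := ℕ))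
    by_contra! hnm
    exact hmn.2 (hC.antitone hnm)

theorem exists_isIndepSpokeSystem_of_isCountablyGenerated [(𝓝 x).IsCountablyGenerated] :
    ∃ (I : Type u) (S : I → Set X), IsIndepSpokeSystem x S := by
  refine ⟨PUnit, fun _ => univ, ⟨inferInstance, fun _ => subset_univ _, fun _ => mem_univ x,
    fun _ => wellBasedWithin_univ_of_isCountablyGenerated, fun U hU => ?_, fun V hV => ?_⟩,
    fun i j hij => (hij (Subsingleton.elim i j)).elim⟩
  · exact mem_of_superset (by simpa using (hU PUnit.unit).2) (subset_iUnion U PUnit.unit)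
  · exact ⟨fun _ => V, fun _ => ⟨subset_univ V, mem_nhdsWithin_of_mem_nhds hV⟩,
      iUnion_subset fun _ => Subset.rfl⟩

theorem WellBasedWithin.exists_isChain_basis {S : Set X} (h : WellBasedWithin x S) :
    ∃ B : Set (Set X), (𝓝[S] x).HasBasis (· ∈ B) id ∧ IsChain (· ⊆ ·) B := by
  obtain ⟨B, hmem, hbase, hchain, -⟩ := h
  refine ⟨B, ⟨fun t => ⟨fun ht => ?_, fun ⟨b, hb, hbt⟩ => mem_of_superset (hmem b hb).2 hbt⟩⟩,
    hchain⟩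
  obtain ⟨b, hb, hbt⟩ := hbase (t ∩ S) inter_subset_right (inter_mem ht self_mem_nhdsWithin)
  exact ⟨b, hb, hbt.trans inter_subset_left⟩

theorem isCountablyGenerated_nhdsWithin_of_isChain_basis (hSF : StronglyFrechetAt x)
    {S : Set X} {B : Set (Set X)} (hB : (𝓝[S] x).HasBasis (· ∈ B) id)
    (hchain : IsChain (· ⊆ ·) B) : (𝓝[S] x).IsCountablyGenerated := by
  by_contra hF
  have hcoinitial : ∀ b : ℕ → Set X, (∀ n, b n ∈ B) → ∃ c ∈ B, ∀ n, c ⊆ b n := by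
    intro b hbB
    by_contra! hno
    refine hF (HasBasis.isCountablyGenerated (p := fun _ : ℕ => True) (s := b)
      (hB.to_hasBasis (fun c hc => ?_) fun n _ => ⟨b n, hbB n, Subset.rfl⟩))
    obtain ⟨n, hn⟩ := hno c hc
    exact ⟨n, trivial, (hchain.total hc (hbB n)).resolve_left hn⟩
  have hk : (𝓝[S] x).ker ∉ 𝓝[S] x := fun hk =>
    hF (eq_principal_ker_of_ker_mem hk ▸ isCountablyGenerated_principal _)
  obtain ⟨u, hu, hlim⟩ := hSF (fun _ => S \ (𝓝[S] x).ker) antitone_const fun _ =>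
    mem_closure_sdiff_ker nhdsWithin_le_nhds hk self_mem_nhdsWithin
  have hescape : ∀ n, ∃ b ∈ B, u n ∉ b := fun n => by
    simpa only [hB.ker, mem_iInter, id, not_forall, exists_prop] using (hu n).2
  choose b hbB hub using hescape
  obtain ⟨c, hcB, hcb⟩ := hcoinitial b hbB
  have hlimS : Tendsto u atTop (𝓝[S] x) :=
    tendsto_nhdsWithin_iff.2 ⟨hlim, Eventually.of_forall fun n => (hu n).1⟩
  obtain ⟨n, hn⟩ := (hlimS.eventually_mem (hB.mem_of_mem hcB)).exists
  exact hub n (hcb n hn)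

end

namespace IsIndepSpokeSystem

variable {X : Type u} [TopologicalSpace X] {x : X} {I : Type v} {S : I → Set X}

theorem not_tendsto_of_finite_fibers (h : IsIndepSpokeSystem x S) {u : ℕ → X} {j : ℕ → I}
    (hu : ∀ n, u n ∈ S (j n) \ NbhdCore x) (hfin : ∀ i, (j ⁻¹' {i}).Finite) :
    ¬ Tendsto u atTop (𝓝 x) := by
  obtain ⟨⟨-, -, -, -, hunion, -⟩, hindep⟩ := h
  intro hlim
  have hW : ∀ i, S i \ u '' (j ⁻¹' {i}) ⊆ S i ∧ S i \ u '' (j ⁻¹' {i}) ∈ 𝓝[S i] x := by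
    refine fun i => ⟨sdiff_subset, sdiff_mem self_mem_nhdsWithin (mem_nhdsWithin_of_mem_nhds ?_)⟩
    refine compl_mem_of_finite_of_disjoint_ker ((hfin i).image u) (disjoint_left.2 ?_)
    rintro _ ⟨n, -, rfl⟩
    exact (hu n).2
  obtain ⟨n, hn⟩ := (hlim.eventually_mem (hunion _ hW)).exists
  obtain ⟨i, hni, hnu⟩ := mem_iUnion.1 hn
  by_cases hji : j n = i
  · exact hnu ⟨n, hji, rfl⟩
  · exact (hu n).2 (hindep _ _ hji ▸ ⟨(hu n).1, hni⟩)

theorem exists_iUnion_subset_of_hasAntitoneBasis (h : IsIndepSpokeSystem x S)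
    (hSF : StronglyFrechetAt x) {V : I → ℕ → Set X} (hV : ∀ i, (𝓝[S i] x).HasAntitoneBasis (V i))
    (hVS : ∀ i n, V i n ⊆ S i)
    (hker : ∀ i, (𝓝[S i] x).ker ∈ 𝓝[S i] x → ∀ n, V i n = (𝓝[S i] x).ker)
    {U : Set X} (hU : U ∈ 𝓝 x) : ∃ n, ⋃ i, V i n ⊆ U := by
  by_contra! hescape
  set T : ℕ → Set I := fun n => {i | ¬ V i n ⊆ U}
  have hT_anti : Antitone T := fun m n hmn i hi hsub => hi (((hV i).antitone hmn).trans hsub)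
  have hT_ne : ∀ n, (T n).Nonempty := fun n =>
    (by simpa only [iUnion_subset_iff, not_forall] using hescape n : ∃ i, ¬ V i n ⊆ U)
  -- in a principal spoke every `V i n` is the kernel, which lies in `U`
  have hT_ker : ∀ n, ∀ i ∈ T n, (𝓝[S i] x).ker ∉ 𝓝[S i] x := fun n i hi hk =>
    hi ((hker i hk n).symm ▸ subset_ker.1 Subset.rfl U (mem_nhdsWithin_of_mem_nhds hU))
  set A : ℕ → Set X := fun n => ⋃ i ∈ T n, V i n \ (𝓝[S i] x).ker
  have hA_anti : Antitone A := fun m n hmn =>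
    iUnion₂_mono' fun i hi => ⟨i, hT_anti hmn hi, sdiff_subset_sdiff_left ((hV i).antitone hmn)⟩
  have hA_closure : ∀ n, x ∈ closure (A n) := fun n => by
    obtain ⟨i, hi⟩ := hT_ne n
    exact closure_mono (subset_biUnion_of_mem (u := fun i => V i n \ (𝓝[S i] x).ker) hi)
      (mem_closure_sdiff_ker nhdsWithin_le_nhds (hT_ker n i hi) ((hV i).mem n))
  obtain ⟨u, hu, hlim⟩ := hSF A hA_anti hA_closure
  choose j hjT hjV using fun n => mem_iUnion₂.1 (hu n)
  have hu_spoke : ∀ n, u n ∈ S (j n) \ NbhdCore x := fun n =>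
    have huS := hVS _ _ (hjV n).1
    ⟨huS, fun hc => (hjV n).2 ((ker_nhdsWithin (S (j n))).symm ▸ ⟨hc, huS⟩)⟩
  refine h.not_tendsto_of_finite_fibers hu_spoke (fun i => ?_) hlim
  obtain ⟨k, hk⟩ := (hV i).mem_iff.1 (mem_nhdsWithin_of_mem_nhds hU)
  refine (finite_lt_nat k).subset fun n (hn : j n = i) => show n < k from ?_
  subst hn
  refine lt_of_not_ge fun hkn => ?_
  exact hjT n (((hV (j n)).antitone hkn).trans hk)

theorem isCountablyGenerated_nhds (h : IsIndepSpokeSystem x S) (hSF : StronglyFrechetAt x) :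
    (𝓝 x).IsCountablyGenerated := by
  have ⟨⟨_, _, _, hwell, hunion, _⟩, _⟩ := h
  have hcg : ∀ i, (𝓝[S i] x).IsCountablyGenerated := fun i => by
    obtain ⟨B, hB, hchain⟩ := (hwell i).exists_isChain_basis
    exact isCountablyGenerated_nhdsWithin_of_isChain_basis hSF hB hchain
  choose V hV hVS hker using fun i =>
    have := hcg i
    exists_antitone_basis_subset_and_eq_ker (self_mem_nhdsWithin (s := S i) (a := x))
  have hVmem : ∀ n i, V i n ⊆ S i ∧ V i n ∈ 𝓝[S i] x := fun n i => ⟨hVS i n, (hV i).mem n⟩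
  refine HasBasis.isCountablyGenerated (p := fun _ : ℕ => True) (s := fun n => ⋃ i, V i n)
    ⟨fun U => ⟨fun hU => ?_, fun ⟨n, _, hn⟩ => mem_of_superset (hunion _ (hVmem n)) hn⟩⟩
  obtain ⟨n, hn⟩ := h.exists_iUnion_subset_of_hasAntitoneBasis hSF hV hVS hker hU
  exact ⟨n, trivial, hn⟩

end IsIndepSpokeSystem

/-- Theorem 4.4 and Corollary 4.5: if `x` admits an independent spoke system and
`X` is strongly Fréchet at `x`, then `X` is first-countable at `x`; consequently,
`X` is first-countable at `x` iff `x` admits an independent spoke system and `X`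
is strongly Fréchet at `x`. -/
theorem stmt_16 {X : Type u} [TopologicalSpace X] (x : X) :
    (((∃ (I : Type u) (S : I → Set X), IsIndepSpokeSystem x S) ∧
        StronglyFrechetAt x) → FirstCountableAt x) ∧
    (FirstCountableAt x ↔
      (∃ (I : Type u) (S : I → Set X), IsIndepSpokeSystem x S) ∧
        StronglyFrechetAt x) := by
  have hard : ((∃ (I : Type u) (S : I → Set X), IsIndepSpokeSystem x S) ∧
      StronglyFrechetAt x) → FirstCountableAt x := fun ⟨⟨_, _, hS⟩, hSF⟩ =>
    firstCountableAt_iff_isCountablyGenerated.2 (hS.isCountablyGenerated_nhds hSF)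
  refine ⟨hard, fun h => ?_, hard⟩
  have := firstCountableAt_iff_isCountablyGenerated.1 h
  exact ⟨exists_isIndepSpokeSystem_of_isCountablyGenerated,
    stronglyFrechetAt_of_isCountablyGenerated⟩
end

section
/- The one-point compactification of an uncountable discrete space is strongly Fréchet but not first-countable at the point at infinity; consequently it admits no independent spoke system at that point. -/
open Filter Topology Set

universe u v

/-!
In the one-point compactification of a discrete space `Y`, the neighbourhoods of `∞` are the
sets containing `∞` whose trace on `Y` is cofinite. A decreasing sequence of sets accumulating
at `∞` (and eventually missing it) has infinite traces on `Y`, so an injective selection from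
them converges to `∞`; and countably many cofinite sets cannot separate `∞` from the
uncountably many points of `Y`. A well-based spoke has countable trace on `Y`, because the gaps
`S \ b` of its neighbourhood base form a chain of finite sets. Removing one point from every
spoke shows, via independence, that only finitely many spokes meet `Y`, and these together
with a finite set would cover `Y`.
-/

open OnePoint

theorem nbhdCore_eq_singleton {X : Type u} [TopologicalSpace X] [T1Space X] (x : X) :
    NbhdCore x = {x} := by
  rw [← nhdsKer_eq_of_t1Space {x}, nhdsKer_singleton_eq_ker_nhds]
  rfl

theorem stronglyFrechetAt_of_isOpen_singleton {X : Type u} [TopologicalSpace X] {x : X}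
    (hx : IsOpen {x}) : StronglyFrechetAt x := by
  intro A _ hcl
  have hmem : ∀ n, x ∈ A n := fun n => by
    simpa using mem_closure_iff_nhds.1 (hcl n) {x} (hx.mem_nhds rfl)
  exact ⟨fun _ => x, hmem, tendsto_const_nhds⟩

theorem exists_injective_forall_mem {α : Type*} {T : ℕ → Set α} (hT : ∀ n, (T n).Infinite) :
    ∃ u : ℕ → α, Function.Injective u ∧ ∀ n, u n ∈ T n := by
  classical
  choose pick pick_mem pick_fresh using fun n (s : Finset α) => (hT n).exists_notMem_finset s
  -- `chosen n` holds the first `n` terms, and the `n`-th term is picked outside it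
  let chosen : ℕ → Finset α := fun n => Nat.rec ∅ (fun k s => insert (pick k s) s) n
  have mem_chosen : ∀ m n, m < n → pick m (chosen m) ∈ chosen n := by
    intro m n hmn
    induction hmn with
    | refl => exact Finset.mem_insert_self _ _
    | step _ ih => exact Finset.mem_insert_of_mem ih
  refine ⟨fun n => pick n (chosen n), .of_lt_imp_ne fun m n hmn heq => ?_,
    fun n => pick_mem _ _⟩
  exact pick_fresh n (chosen n) (heq ▸ mem_chosen m n hmn)

theorem IsChain.countable_of_forall_finite {α : Type*} {C : Set (Set α)}
    (hC : IsChain (· ⊆ ·) C) (hfin : ∀ s ∈ C, s.Finite) : C.Countable := by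
  refine countable_iff_exists_injOn.2 ⟨ncard, fun s hs t ht hst => ?_⟩
  rcases hC.total hs ht with h | h
  · exact eq_of_subset_of_ncard_le h hst.ge (hfin t ht)
  · exact (eq_of_subset_of_ncard_le h hst.le (hfin s hs)).symm

section Discrete

variable {Y : Type u} [TopologicalSpace Y] [DiscreteTopology Y]

theorem OnePoint.nhds_infty_eq_of_discreteTopology :
    𝓝 (∞ : OnePoint Y) = map ((↑) : Y → OnePoint Y) cofinite ⊔ pure ∞ := by
  rw [nhds_infty_eq, coclosedCompact_eq_cocompact, cocompact_eq_cofinite]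

theorem OnePoint.mem_nhds_infty_iff_of_discreteTopology {V : Set (OnePoint Y)} :
    V ∈ 𝓝 (∞ : OnePoint Y) ↔ ∞ ∈ V ∧ ((↑) ⁻¹' V : Set Y)ᶜ.Finite := by
  rw [nhds_infty_eq_of_discreteTopology, mem_sup, mem_map, mem_pure, mem_cofinite, and_comm]

theorem OnePoint.tendsto_coe_infty_of_injective {u : ℕ → Y} (hu : Function.Injective u) :
    Tendsto (fun n => (u n : OnePoint Y)) atTop (𝓝 ∞) := by
  rw [nhds_infty_eq_of_discreteTopology, ← Nat.cofinite_eq_atTop]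
  exact (tendsto_map.comp hu.tendsto_cofinite).mono_right le_sup_left

theorem OnePoint.infinite_preimage_coe_of_infty_mem_closure {A : Set (OnePoint Y)}
    (hcl : ∞ ∈ closure A) (hA : ∞ ∉ A) : ((↑) ⁻¹' A : Set Y).Infinite := fun hfin => by
  have hnhds : Aᶜ ∈ 𝓝 (∞ : OnePoint Y) :=
    mem_nhds_infty_iff_of_discreteTopology.2 ⟨hA, by rwa [preimage_compl, compl_compl]⟩
  exact (mem_closure_iff_nhds.1 hcl Aᶜ hnhds).ne_empty (compl_inter_self A)

theorem OnePoint.stronglyFrechetAt_coe (y : Y) : StronglyFrechetAt (y : OnePoint Y) :=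
  stronglyFrechetAt_of_isOpen_singleton <| by
    simpa using isOpen_image_coe.2 (isOpen_discrete {y})

theorem OnePoint.stronglyFrechetAt_infty : StronglyFrechetAt (∞ : OnePoint Y) := by
  intro A hA hcl
  by_cases hall : ∀ n, ∞ ∈ A n
  · exact ⟨fun _ => ∞, hall, tendsto_const_nhds⟩
  obtain ⟨m, hm⟩ := not_forall.1 hall
  have hinf : ∀ n, ((↑) ⁻¹' A (n + m) : Set Y).Infinite := fun n =>
    infinite_preimage_coe_of_infty_mem_closure (hcl _) fun h => hm (hA (Nat.le_add_left m n) h)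
  obtain ⟨u, hu, huA⟩ := exists_injective_forall_mem hinf
  refine ⟨fun n => u (n - m), fun n => hA (by omega) (huA (n - m)), ?_⟩
  exact (tendsto_coe_infty_of_injective hu).comp (tendsto_sub_atTop_nat m)

theorem OnePoint.not_firstCountableAt_infty (hY : ¬ Countable Y) :
    ¬ FirstCountableAt (∞ : OnePoint Y) := by
  rintro ⟨B, hBc, hBnhds, hBbase⟩
  have hcount : (⋃ b ∈ B, ((↑) ⁻¹' b : Set Y)ᶜ).Countable :=
    hBc.biUnion fun b hb => (mem_nhds_infty_iff_of_discreteTopology.1 (hBnhds b hb)).2.countable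
  obtain ⟨y, hy⟩ : ∃ y, y ∉ ⋃ b ∈ B, ((↑) ⁻¹' b : Set Y)ᶜ :=
    not_forall.1 fun h => hY (countable_univ_iff.1 (hcount.mono fun y _ => h y))
  obtain ⟨b, hb, hbsub⟩ := hBbase _ (compl_singleton_mem_nhds (coe_ne_infty y).symm)
  simp only [mem_iUnion, mem_compl_iff, mem_preimage, not_exists, not_not] at hy
  exact hbsub (hy b hb) rfl

theorem OnePoint.countable_preimage_coe_of_wellBasedWithin {S : Set (OnePoint Y)}
    (hS : WellBasedWithin ∞ S) : ((↑) ⁻¹' S : Set Y).Countable := by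
  obtain ⟨B, hBnhds, hBbase, hBchain, -⟩ := hS
  let gap : Set (OnePoint Y) → Set Y := fun b => (↑) ⁻¹' (S \ b)
  have gap_finite : ∀ b ∈ B, (gap b).Finite := fun b hb => by
    have := mem_nhds_infty_iff_of_discreteTopology.1 (mem_inf_principal.1 (hBnhds b hb).2)
    convert this.2 using 1
    ext y
    simp [gap]
  have gap_chain : IsChain (· ⊆ ·) (gap '' B) := by
    rintro _ ⟨b, hb, rfl⟩ _ ⟨b', hb', rfl⟩ -
    rcases hBchain.total hb hb' with h | h
    · exact Or.inr (preimage_mono (sdiff_subset_sdiff_right h))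
    · exact Or.inl (preimage_mono (sdiff_subset_sdiff_right h))
  refine ((gap_chain.countable_of_forall_finite (forall_mem_image.2 gap_finite)).sUnion
    (forall_mem_image.2 fun b hb => (gap_finite b hb).countable)).mono fun y hy => ?_
  obtain ⟨b, hb, hbsub⟩ :=
    hBbase (S \ {(y : OnePoint Y)}) sdiff_subset
      (inter_mem_nhdsWithin S (compl_singleton_mem_nhds (coe_ne_infty y).symm))
  exact mem_sUnion_of_mem (show y ∈ gap b from ⟨hy, fun hyb => (hbsub hyb).2 rfl⟩)
    (mem_image_of_mem gap hb)

theorem IsSpokeSystem.finite_compl_preimage_coe_iUnion {I : Type v} {S : I → Set (OnePoint Y)}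
    (hS : IsSpokeSystem ∞ S) : ((↑) ⁻¹' ⋃ i, S i : Set Y)ᶜ.Finite := by
  obtain ⟨-, -, -, -, hunion, -⟩ := hS
  exact (mem_nhds_infty_iff_of_discreteTopology.1
    (hunion S fun _ => ⟨subset_rfl, self_mem_nhdsWithin⟩)).2

theorem IsIndepSpokeSystem.finite_setOf_nonempty_preimage_coe {I : Type v}
    {S : I → Set (OnePoint Y)} (hS : IsIndepSpokeSystem ∞ S) :
    {i | ((↑) ⁻¹' S i : Set Y).Nonempty}.Finite := by
  rcases isEmpty_or_nonempty Y with hY | hY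
  · simp [Set.Nonempty]
  obtain ⟨⟨-, -, -, -, hunion, -⟩, hindep⟩ := hS
  have disjoint : ∀ i j (y : Y), i ≠ j → (y : OnePoint Y) ∈ S i → ↑y ∉ S j := by
    intro i j y hij hi hj
    have hcore : (y : OnePoint Y) ∈ NbhdCore ∞ := hindep i j hij ▸ ⟨hi, hj⟩
    exact coe_ne_infty y (by rwa [nbhdCore_eq_singleton] at hcore)
  let pick : I → Y := fun i => Classical.epsilon fun y : Y => (y : OnePoint Y) ∈ S i
  have pick_mem : ∀ i, ((↑) ⁻¹' S i : Set Y).Nonempty → (pick i : OnePoint Y) ∈ S i :=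
    fun _ hi => Classical.epsilon_spec hi
  -- removing one point from each spoke still leaves a neighbourhood of `∞`, which must
  -- contain all but finitely many of the removed points; by independence it contains none
  have hnhds := hunion (fun i => S i \ {(pick i : OnePoint Y)}) fun i =>
    ⟨sdiff_subset, inter_mem_nhdsWithin _ (compl_singleton_mem_nhds (coe_ne_infty _).symm)⟩
  refine Finite.of_finite_image (f := pick)
    ((mem_nhds_infty_iff_of_discreteTopology.1 hnhds).2.subset ?_) ?_
  · rintro _ ⟨i, hi, rfl⟩ hmem
    obtain ⟨j, hj, hne⟩ := mem_iUnion.1 hmem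
    rcases eq_or_ne i j with rfl | hij
    · exact hne rfl
    · exact disjoint i j _ hij (pick_mem i hi) hj
  · intro i hi j hj hij
    by_contra hne
    exact disjoint i j _ hne (pick_mem i hi) (hij ▸ pick_mem j hj)

theorem OnePoint.not_exists_isIndepSpokeSystem_infty (hY : ¬ Countable Y) :
    ¬ ∃ (I : Type u) (S : I → Set (OnePoint Y)), IsIndepSpokeSystem ∞ S := by
  rintro ⟨I, S, hS⟩
  have hwb : ∀ i, WellBasedWithin ∞ (S i) := hS.1.2.2.2.1
  have hcover : univ ⊆ ((↑) ⁻¹' ⋃ i, S i : Set Y)ᶜ ∪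
      ⋃ i ∈ {i | ((↑) ⁻¹' S i : Set Y).Nonempty}, (↑) ⁻¹' S i := by
    intro y _
    by_cases hy : (y : OnePoint Y) ∈ ⋃ i, S i
    · obtain ⟨i, hi⟩ := mem_iUnion.1 hy
      exact Or.inr (mem_biUnion ⟨y, hi⟩ hi)
    · exact Or.inl hy
  refine hY (countable_univ_iff.1 (Countable.mono hcover ?_))
  exact hS.1.finite_compl_preimage_coe_iUnion.countable.union
    (hS.finite_setOf_nonempty_preimage_coe.countable.biUnion fun i _ =>
      countable_preimage_coe_of_wellBasedWithin (hwb i))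

end Discrete

/-- The one-point compactification of an uncountable discrete space is strongly
Fréchet but not first-countable at the point at infinity; consequently it admits
no independent spoke system at that point. -/
theorem stmt_17 {Y : Type u} [TopologicalSpace Y] [DiscreteTopology Y]
    (hY : ¬ Countable Y) :
    (∀ p : OnePoint Y, StronglyFrechetAt p) ∧
    ¬ FirstCountableAt (OnePoint.infty : OnePoint Y) ∧
    ¬ ∃ (I : Type u) (S : I → Set (OnePoint Y)),
        IsIndepSpokeSystem (OnePoint.infty : OnePoint Y) S :=
  ⟨fun p => p.rec stronglyFrechetAt_infty stronglyFrechetAt_coe, not_firstCountableAt_infty hY,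
    not_exists_isIndepSpokeSystem_infty hY⟩
end

section
/- Let X be a space, x ∈ X, and let (S_i)_{i∈I} be a spoke system for x. If (x_n)_{n<ω} is a sequence contained in X ∖ N_x that clusters at x, then there exists i ∈ I such that (x_n) has a subsequence lying in S_i that converges to x. -/
open Filter Topology Set

universe u v

/-!
If no spoke carries a subsequence converging to `x`, every spoke `S i` contains a
neighbourhood of `x` (in `S i`) missing the whole sequence, and the union of these is a
neighbourhood of `x` missing the sequence, contradicting clustering.

Within one spoke, every `u n ∉ N_x` is excluded by some member `b n` of a chain base at `x`.
Either a base member lies below all `b n`, and it misses the sequence, or the `b n` form a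
countable base. In the countable case the sequence either eventually leaves some
neighbourhood, and removing finitely many more points gives one that misses it entirely,
or it clusters in the spoke and so has a subsequence converging there.
-/
theorem compl_singleton_mem_nhds_of_notMem_nbhdCore {X : Type u} [TopologicalSpace X] {x y : X}
    (hy : y ∉ NbhdCore x) : {y}ᶜ ∈ 𝓝 x := by
  obtain ⟨W, hW, hyW⟩ : ∃ W ∈ 𝓝 x, y ∉ W := by simpa [NbhdCore] using hy
  exact mem_of_superset hW fun z hz hzy => hyW (hzy ▸ hz)

theorem WellBasedWithin.exists_isChain_hasBasis {X : Type u} [TopologicalSpace X] {x : X}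
    {S : Set X} (hS : WellBasedWithin x S) :
    ∃ B : Set (Set X), IsChain (· ⊆ ·) B ∧ (𝓝[S] x).HasBasis (· ∈ B) id := by
  obtain ⟨B, hBmem, hBbase, hchain, -⟩ := hS
  refine ⟨B, hchain, ⟨fun t => ⟨fun ht => ?_,
    fun ⟨b, hb, hbt⟩ => mem_of_superset (hBmem b hb).2 hbt⟩⟩⟩
  exact hBbase (t ∩ S) inter_subset_right (inter_mem ht self_mem_nhdsWithin) |>.imp
    fun b ⟨hb, hbt⟩ => ⟨hb, hbt.trans inter_subset_left⟩

theorem Filter.HasBasis.iInter_mem_or_isCountablyGenerated {α : Type*} {f : Filter α}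
    {B : Set (Set α)} (hB : f.HasBasis (· ∈ B) id) (hchain : IsChain (· ⊆ ·) B)
    (t : ℕ → Set α) (ht : ∀ n, t n ∈ f) : (⋂ n, t n) ∈ f ∨ f.IsCountablyGenerated := by
  choose b hbB hbt using fun n => hB.mem_iff.1 (ht n)
  -- Without a common lower bound in the chain, the `b n` are coinitial in `B`.
  by_cases hlower : ∃ c ∈ B, ∀ n, c ⊆ b n
  · obtain ⟨c, hc, hcb⟩ := hlower
    exact Or.inl (mem_of_superset (hB.mem_of_mem hc) (subset_iInter fun n => (hcb n).trans (hbt n)))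
  push Not at hlower
  refine Or.inr (HasBasis.isCountablyGenerated (p := fun _ : ℕ => True) (s := b) ⟨fun s => ?_⟩)
  refine ⟨fun hs => ?_, fun ⟨n, _, hns⟩ => mem_of_superset (hB.mem_of_mem (hbB n)) hns⟩
  obtain ⟨c, hc, hcs⟩ := hB.mem_iff.1 hs
  obtain ⟨n, hcn⟩ := hlower c hc
  have hbc : b n ⊆ c := (hchain.total hc (hbB n)).resolve_left hcn
  exact ⟨n, trivial, hbc.trans hcs⟩

theorem compl_range_mem_of_disjoint_map_atTop {α : Type*} {f : Filter α} {u : ℕ → α}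
    (hu : ∀ n, {u n}ᶜ ∈ f) (hdisj : Disjoint f (map u atTop)) : (range u)ᶜ ∈ f := by
  obtain ⟨U, hU, V, hV, hUV⟩ := Filter.disjoint_iff.1 hdisj
  obtain ⟨N, hN⟩ := mem_atTop_sets.1 (mem_map.1 hV)
  have hfin : (⋂ n ∈ Iio N, {u n}ᶜ) ∈ f := (biInter_mem (finite_Iio N)).2 fun n _ => hu n
  refine mem_of_superset (inter_mem hU hfin) ?_
  rintro y ⟨hyU, hyfin⟩ ⟨n, rfl⟩
  rcases lt_or_ge n N with hn | hn
  · exact mem_iInter₂.1 hyfin n hn rfl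
  · exact disjoint_left.1 hUV hyU (hN n hn)

theorem WellBasedWithin.compl_range_mem_or_exists_subseq_tendsto {X : Type u}
    [TopologicalSpace X] {x : X} {S : Set X} (hS : WellBasedWithin x S) {u : ℕ → X}
    (hu : ∀ n, u n ∉ NbhdCore x) :
    (range u)ᶜ ∈ 𝓝[S] x ∨ ∃ φ : ℕ → ℕ, StrictMono φ ∧ (∀ n, u (φ n) ∈ S) ∧
      Tendsto (u ∘ φ) atTop (𝓝 x) := by
  have hsingle : ∀ n, {u n}ᶜ ∈ 𝓝[S] x := fun n =>
    mem_nhdsWithin_of_mem_nhds (compl_singleton_mem_nhds_of_notMem_nbhdCore (hu n))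
  obtain ⟨B, hchain, hB⟩ := hS.exists_isChain_hasBasis
  rcases hB.iInter_mem_or_isCountablyGenerated hchain _ hsingle with hmem | hcount
  · left
    simpa only [← compl_iUnion, iUnion_singleton_eq_range] using hmem
  by_cases hdisj : Disjoint (𝓝[S] x) (map u atTop)
  · exact Or.inl (compl_range_mem_of_disjoint_map_atTop hsingle hdisj)
  right
  have : NeBot (𝓝[S] x ⊓ map u atTop) := ⟨fun h => hdisj (disjoint_iff.2 h)⟩
  obtain ⟨θ, hθ, hlim⟩ := subseq_tendsto_of_neBot this
  obtain ⟨hlimx, hθS⟩ := tendsto_nhdsWithin_iff.1 hlim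
  obtain ⟨N, hN⟩ := eventually_atTop.1 hθS
  refine ⟨θ ∘ (· + N), hθ.comp (strictMono_id.add_const N), fun n => hN _ le_add_self, ?_⟩
  exact hlimx.comp (tendsto_add_atTop_nat N)

/-- Lemma 4.7: if `(S i)` is a spoke system for `x` and a sequence contained in
`X \ N_x` clusters at `x`, then some spoke contains a subsequence converging
to `x`. -/
theorem stmt_18 {X : Type u} [TopologicalSpace X] {I : Type v} (x : X)
    (S : I → Set X) (h : IsSpokeSystem x S) (u : ℕ → X)
    (hu : ∀ n, u n ∉ NbhdCore x)
    (hcluster : ∀ U ∈ nhds x, ∀ N : ℕ, ∃ n ≥ N, u n ∈ U) :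
    ∃ (i : I) (φ : ℕ → ℕ), StrictMono φ ∧ (∀ n, u (φ n) ∈ S i) ∧
      Filter.Tendsto (u ∘ φ) Filter.atTop (nhds x) := by
  by_contra! hnone
  obtain ⟨-, -, -, hwb, hunion, -⟩ := h
  have hspoke : ∀ i, (range u)ᶜ ∈ 𝓝[S i] x := fun i =>
    ((hwb i).compl_range_mem_or_exists_subseq_tendsto hu).resolve_right
      fun ⟨φ, hφ, hφS, hlim⟩ => hnone i φ hφ hφS hlim
  have hnhds : (range u)ᶜ ∈ 𝓝 x :=
    mem_of_superset (hunion (fun i => (range u)ᶜ ∩ S i) fun i =>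
      ⟨inter_subset_right, inter_mem (hspoke i) self_mem_nhdsWithin⟩)
      (iUnion_subset fun _ => inter_subset_left)
  obtain ⟨n, -, hn⟩ := hcluster _ hnhds 0
  exact hn (mem_range_self n)
end

section
/- Let X be the plane ℝ² retopologized so that every nonzero point is isolated and the origin 0 has neighbourhood base consisting of all sets of the form ⋃_{x≠0} B_{x,n_x}, where for nonzero x and n ∈ ℕ⁺, B_{x,n} := B(0, 1/n) ∩ S_x, with S_x := {y ∈ ℝ² : |y − x| = |x|} the circle through 0 centred at x, B(0,ε) the Euclidean ball, and (n_x)_{x≠0} an arbitrary assignment of positive integers. Then X is a Fréchet-Urysohn space. -/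
open Filter Topology Set

/-- The circle through the origin centred at `x` (Euclidean norm). -/
def circleThrough0 (x : EuclideanSpace ℝ (Fin 2)) : Set (EuclideanSpace ℝ (Fin 2)) :=
  {y | ‖y - x‖ = ‖x‖}

/-- `B_{x,n} = B(0, 1/n) ∩ S_x`. -/
def Bxn (x : EuclideanSpace ℝ (Fin 2)) (n : ℕ+) : Set (EuclideanSpace ℝ (Fin 2)) :=
  {y | ‖y‖ < 1 / (n : ℝ)} ∩ circleThrough0 x

/-!
At a nonzero point the space is discrete, so only the origin matters. If `0 ∈ closure A`, some
circle `S_x` meets `A` in every `B_{x,n}`: otherwise choosing for each `x` an `n_x` with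
`A ∩ B_{x,n_x} = ∅` yields a neighbourhood of `0` missing `A`. Picking `u_n ∈ A ∩ B_{x,n}` gives a
sequence that lies eventually in `B_{x,m}` for every `m`, hence in every basic neighbourhood of `0`.
-/

theorem Bxn_antitone (x : EuclideanSpace ℝ (Fin 2)) : Antitone (Bxn x) := by
  intro m n hmn y ⟨hy, hcirc⟩
  refine ⟨show ‖y‖ < _ from hy.trans_le ?_, hcirc⟩
  gcongr
  exact_mod_cast hmn

section UnionBasis

variable {X ι : Type*} [TopologicalSpace X] {p : X} {I : Set ι} {B : ι → ℕ+ → Set X}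

theorem exists_forall_inter_nonempty_of_hasBasis_iUnion
    (hbase : (𝓝 p).HasBasis (fun _ : ι → ℕ+ => True) fun n => ⋃ i ∈ I, B i (n i))
    {A : Set X} (hp : p ∈ closure A) : ∃ i ∈ I, ∀ n, (A ∩ B i n).Nonempty := by
  by_contra! hempty
  have hmiss : ∀ i, ∃ n, i ∈ I → A ∩ B i n = ∅ := fun i => by
    by_cases hi : i ∈ I
    · exact (hempty i hi).imp fun _ hn _ => hn
    · exact ⟨1, fun h => absurd h hi⟩
  choose n hn using hmiss
  obtain ⟨y, hyU, hyA⟩ := mem_closure_iff_nhds.1 hp _ (hbase.mem_of_mem (i := n) trivial)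
  obtain ⟨i, hi, hy⟩ := mem_iUnion₂.1 hyU
  exact (hn i hi).subset ⟨hyA, hy⟩

theorem tendsto_of_forall_mem_of_hasBasis_iUnion
    (hbase : (𝓝 p).HasBasis (fun _ : ι → ℕ+ => True) fun n => ⋃ i ∈ I, B i (n i))
    {i : ι} (hi : i ∈ I) (hB : Antitone (B i)) {u : ℕ → X}
    (hu : ∀ k, u k ∈ B i k.succPNat) : Tendsto u atTop (𝓝 p) := by
  refine hbase.tendsto_right_iff.2 fun m _ => eventually_atTop.2 ⟨m i, fun k hk => ?_⟩
  refine mem_iUnion₂.2 ⟨i, hi, hB ?_ (hu k)⟩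
  rw [← PNat.coe_le_coe, Nat.succPNat_coe]
  omega

theorem mem_seqClosure_of_hasBasis_iUnion
    (hbase : (𝓝 p).HasBasis (fun _ : ι → ℕ+ => True) fun n => ⋃ i ∈ I, B i (n i))
    (hB : ∀ i, Antitone (B i)) {A : Set X} (hp : p ∈ closure A) : p ∈ seqClosure A := by
  obtain ⟨i, hi, hmeet⟩ := exists_forall_inter_nonempty_of_hasBasis_iUnion hbase hp
  choose u hu using fun k : ℕ => hmeet k.succPNat
  exact ⟨u, fun k => (hu k).1, tendsto_of_forall_mem_of_hasBasis_iUnion hbase hi (hB i)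
    fun k => (hu k).2⟩

end UnionBasis

theorem mem_seqClosure_of_nhds_eq_pure {X : Type*} [TopologicalSpace X] {p : X}
    (hp : 𝓝 p = pure p) {A : Set X} (hpA : p ∈ closure A) : p ∈ seqClosure A := by
  obtain ⟨y, rfl, hyA⟩ := mem_closure_iff_nhds.1 hpA {p} (hp ▸ mem_pure.2 rfl)
  exact subset_seqClosure hyA

/-- Theorem 4.9 (first part): the plane retopologized so that nonzero points are
isolated and the origin has neighbourhood base the sets `⋃_{x ≠ 0} B_{x, n x}`
is Fréchet–Urysohn. -/
theorem stmt_19 (t : TopologicalSpace (EuclideanSpace ℝ (Fin 2)))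
    (hiso : ∀ p : EuclideanSpace ℝ (Fin 2), p ≠ 0 → @nhds _ t p = pure p)
    (hbase : (@nhds _ t 0).HasBasis
      (fun _ : EuclideanSpace ℝ (Fin 2) → ℕ+ => True)
      (fun n => ⋃ x ∈ {x : EuclideanSpace ℝ (Fin 2) | x ≠ 0}, Bxn x (n x))) :
    ∀ (A : Set (EuclideanSpace ℝ (Fin 2))) (p : EuclideanSpace ℝ (Fin 2)),
      p ∈ @closure _ t A →
      ∃ u : ℕ → EuclideanSpace ℝ (Fin 2), (∀ n, u n ∈ A) ∧
        Filter.Tendsto u Filter.atTop (@nhds _ t p) := by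
  let _ := t
  have : FrechetUrysohnSpace (EuclideanSpace ℝ (Fin 2)) := ⟨fun A p hp => by
    by_cases hp0 : p = 0
    · subst hp0
      exact mem_seqClosure_of_hasBasis_iUnion hbase Bxn_antitone hp
    · exact mem_seqClosure_of_nhds_eq_pure (hiso p hp0) hp⟩
  exact fun A p hp => mem_closure_iff_seq_limit.1 hp
end
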